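/- arXiv:2312.06076 — 8 statements merged into one kernel-verified Lean document; each statement's English description precedes it below -/
import Mathlib

section
/- Let (V₁, V₂, β) be a step-two datum. Then its H-type deviation satisfies 0 ≤ δ ≤ 1; that is, 0 ≤ inf{ δ(g_v) : g_v a vertical metric on V₂ } ≤ 1. -/
open scoped RealInnerProductSpace

/-- Hilbert–Schmidt norm of an endomorphism of a finite-dimensional real
inner product space: `‖A‖_HS = (trace (A* ∘ A))^{1/2}`. -/
noncomputable def hsNorm {V : Type*} [NormedAddCommGroup V] [InnerProductSpace ℝ V]
    [FiniteDimensional ℝ V] (A : V →ₗ[ℝ] V) : ℝ :=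
  Real.sqrt (LinearMap.trace ℝ V (LinearMap.adjoint A ∘ₗ A))

section

variable {V₁ V₂ : Type*} [NormedAddCommGroup V₁] [InnerProductSpace ℝ V₁]
  [FiniteDimensional ℝ V₁] [AddCommGroup V₂] [Module ℝ V₂] [FiniteDimensional ℝ V₂]

/-- A step-two datum: nontrivial layers, alternating bracket whose image spans `V₂`. -/
def IsStepTwoDatum (β : V₁ →ₗ[ℝ] V₁ →ₗ[ℝ] V₂) : Prop :=
  0 < Module.finrank ℝ V₁ ∧ 0 < Module.finrank ℝ V₂ ∧ (∀ X : V₁, β X X = 0) ∧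
    Submodule.span ℝ {T : V₂ | ∃ X Y : V₁, β X Y = T} = ⊤

/-- A vertical metric: positive-definite symmetric bilinear form on `V₂`. -/
def IsVerticalMetric (gv : V₂ →ₗ[ℝ] V₂ →ₗ[ℝ] ℝ) : Prop :=
  (∀ S T : V₂, gv S T = gv T S) ∧ ∀ T : V₂, T ≠ 0 → 0 < gv T T

/-- `J` is Kaplan's operator `J_T` for the bracket `β` and vertical metric `gv`. -/
def IsKaplan (β : V₁ →ₗ[ℝ] V₁ →ₗ[ℝ] V₂) (gv : V₂ →ₗ[ℝ] V₂ →ₗ[ℝ] ℝ) (T : V₂)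
    (J : V₁ →ₗ[ℝ] V₁) : Prop :=
  ∀ U W : V₁, ⟪J U, W⟫ = gv (β U W) T

/-- H-type deviation relative to the vertical metric `gv`. -/
noncomputable def deviationOf (β : V₁ →ₗ[ℝ] V₁ →ₗ[ℝ] V₂) (gv : V₂ →ₗ[ℝ] V₂ →ₗ[ℝ] ℝ) : ℝ :=
  (Real.sqrt (Module.finrank ℝ V₁))⁻¹ *
    sSup {x : ℝ | ∃ T : V₂, ∃ J : V₁ →ₗ[ℝ] V₁,
      gv T T = 1 ∧ IsKaplan β gv T J ∧ x = hsNorm (J ∘ₗ J + LinearMap.id)}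

/-- H-type deviation of the step-two datum. -/
noncomputable def deviation (β : V₁ →ₗ[ℝ] V₁ →ₗ[ℝ] V₂) : ℝ :=
  sInf {d : ℝ | ∃ gv : V₂ →ₗ[ℝ] V₂ →ₗ[ℝ] ℝ, IsVerticalMetric gv ∧ d = deviationOf β gv}

end

section auxlemmas

variable {V : Type*} [NormedAddCommGroup V] [InnerProductSpace ℝ V] [FiniteDimensional ℝ V]

lemma trace_eq_sum_inner_onb {ι : Type*} [Fintype ι] [DecidableEq ι]
    (e : OrthonormalBasis ι ℝ V) (A : V →ₗ[ℝ] V) :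
    LinearMap.trace ℝ V A = ∑ i, ⟪e i, A (e i)⟫ := by
  rw [LinearMap.trace_eq_matrix_trace ℝ e.toBasis, Matrix.trace]
  simp [Matrix.diag, LinearMap.toMatrix_apply, OrthonormalBasis.coe_toBasis,
    OrthonormalBasis.coe_toBasis_repr_apply, OrthonormalBasis.repr_apply_apply]

lemma hsNorm_eq_onb {ι : Type*} [Fintype ι] [DecidableEq ι]
    (e : OrthonormalBasis ι ℝ V) (A : V →ₗ[ℝ] V) :
    hsNorm A = Real.sqrt (∑ i, ‖A (e i)‖ ^ 2) := by
  unfold hsNorm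
  rw [trace_eq_sum_inner_onb e]
  congr 1
  refine Finset.sum_congr rfl fun i _ => ?_
  rw [LinearMap.comp_apply, LinearMap.adjoint_inner_right, real_inner_self_eq_norm_sq]

lemma hsNorm_le_of_forall {n : ℕ} (e : OrthonormalBasis (Fin n) ℝ V) (A : V →ₗ[ℝ] V)
    {a : ℝ} (ha : 0 ≤ a) (h : ∀ i, ‖A (e i)‖ ≤ a) : hsNorm A ≤ Real.sqrt n * a := by
  rw [hsNorm_eq_onb e]
  have hsum : ∑ i, ‖A (e i)‖ ^ 2 ≤ (n : ℝ) * a ^ 2 := by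
    calc ∑ i, ‖A (e i)‖ ^ 2 ≤ ∑ _i : Fin n, a ^ 2 :=
          Finset.sum_le_sum fun i _ => pow_le_pow_left₀ (norm_nonneg _) (h i) 2
      _ = (n : ℝ) * a ^ 2 := by simp [Finset.sum_const, nsmul_eq_mul]
  calc Real.sqrt (∑ i, ‖A (e i)‖ ^ 2) ≤ Real.sqrt ((n : ℝ) * a ^ 2) := Real.sqrt_le_sqrt hsum
    _ = Real.sqrt n * a := by
        rw [Real.sqrt_mul (by positivity), Real.sqrt_sq ha]

end auxlemmas

/-- For any step-two datum, the H-type deviation satisfies `0 ≤ δ ≤ 1`. -/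
theorem h_type_deviation_range {V₁ V₂ : Type*} [NormedAddCommGroup V₁]
    [InnerProductSpace ℝ V₁] [FiniteDimensional ℝ V₁]
    [AddCommGroup V₂] [Module ℝ V₂] [FiniteDimensional ℝ V₂]
    (β : V₁ →ₗ[ℝ] V₁ →ₗ[ℝ] V₂) (hβ : IsStepTwoDatum β) :
    0 ≤ deviation β ∧ deviation β ≤ 1 := by
  obtain ⟨hn1, hn2, halt, hspan⟩ := hβ
  have hDnonneg : ∀ d ∈ {d : ℝ | ∃ gv : V₂ →ₗ[ℝ] V₂ →ₗ[ℝ] ℝ,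
      IsVerticalMetric gv ∧ d = deviationOf β gv}, 0 ≤ d := by
    rintro d ⟨gv, hgv, rfl⟩
    unfold deviationOf
    refine mul_nonneg (inv_nonneg.mpr (Real.sqrt_nonneg _)) (Real.sSup_nonneg ?_)
    rintro x ⟨T, J, h1, h2, rfl⟩
    exact Real.sqrt_nonneg _
  refine ⟨Real.sInf_nonneg hDnonneg, ?_⟩
  -- upper bound
  have hsqn : 0 < Real.sqrt (Module.finrank ℝ V₁) := Real.sqrt_pos.mpr (by exact_mod_cast hn1)
  let e := stdOrthonormalBasis ℝ V₁
  let b := Module.finBasis ℝ V₂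
  -- coordinate bounds for β
  have hC : ∀ j, ∃ C : ℝ, 0 ≤ C ∧ ∀ U W : V₁, |b.repr (β U W) j| ≤ C * ‖U‖ * ‖W‖ := by
    intro j
    let L : V₁ →ₗ[ℝ] V₁ →ₗ[ℝ] ℝ := β.compr₂ (b.coord j)
    let f : V₁ →ₗ[ℝ] V₁ →L[ℝ] ℝ :=
      (LinearMap.toContinuousLinearMap : (V₁ →ₗ[ℝ] ℝ) ≃ₗ[ℝ] (V₁ →L[ℝ] ℝ)).toLinearMap ∘ₗ L
    let F : V₁ →L[ℝ] V₁ →L[ℝ] ℝ := LinearMap.toContinuousLinearMap f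
    refine ⟨‖F‖, F.opNorm_nonneg, fun U W => ?_⟩
    have h1 : b.repr (β U W) j = F U W := by
      simp [F, f, L, LinearMap.compr₂_apply, Module.Basis.coord_apply]
    rw [h1]
    calc |F U W| = ‖F U W‖ := rfl
      _ ≤ ‖F U‖ * ‖W‖ := (F U).le_opNorm W
      _ ≤ ‖F‖ * ‖U‖ * ‖W‖ :=
          mul_le_mul_of_nonneg_right (F.le_opNorm U) (norm_nonneg W)
  choose C hC0 hCb using hC
  set Ct := ∑ j, C j with hCtdef
  have hCt0 : 0 ≤ Ct := Finset.sum_nonneg fun j _ => hC0 j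
  -- base vertical metric
  let gv₀ : V₂ →ₗ[ℝ] V₂ →ₗ[ℝ] ℝ := ∑ j, (b.coord j).smulRight (b.coord j)
  have hgv0 : ∀ S T : V₂, gv₀ S T = ∑ j, b.repr S j * b.repr T j := by
    intro S T
    simp [gv₀, LinearMap.sum_apply, LinearMap.smulRight_apply, Module.Basis.coord_apply,
      smul_eq_mul]
  -- key estimate: for every c > 0, the scaled metric has deviation ≤ 1 + c * Ct ^ 2
  have key : ∀ c : ℝ, 0 < c → ∃ gv : V₂ →ₗ[ℝ] V₂ →ₗ[ℝ] ℝ, IsVerticalMetric gv ∧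
      deviationOf β gv ≤ 1 + c * Ct ^ 2 := by
    intro c hc
    set s := Real.sqrt c with hsdef
    have hs : 0 < s := Real.sqrt_pos.mpr hc
    have hs2 : s * s = c := Real.mul_self_sqrt hc.le
    refine ⟨c • gv₀, ⟨?_, ?_⟩, ?_⟩
    · intro S T
      simp only [LinearMap.smul_apply, smul_eq_mul, hgv0]
      congr 1
      exact Finset.sum_congr rfl fun j _ => mul_comm _ _
    · intro T hT
      have hTsum : 0 < ∑ j, b.repr T j * b.repr T j := by
        have hnn : ∀ j ∈ Finset.univ, 0 ≤ b.repr T j * b.repr T j :=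
          fun j _ => mul_self_nonneg _
        obtain ⟨j, hj⟩ : ∃ j, b.repr T j ≠ 0 := by
          by_contra h
          push_neg at h
          exact hT (by
            have : b.repr T = 0 := by ext j; simp [h j]
            simpa using congrArg b.repr.symm this)
        exact Finset.sum_pos' hnn ⟨j, Finset.mem_univ j, mul_self_pos.mpr hj⟩
      simp only [LinearMap.smul_apply, smul_eq_mul, hgv0]
      exact mul_pos hc hTsum
    · -- deviation bound
      unfold deviationOf
      have hbound : ∀ x ∈ {x : ℝ | ∃ T : V₂, ∃ J : V₁ →ₗ[ℝ] V₁,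
          (c • gv₀) T T = 1 ∧ IsKaplan β (c • gv₀) T J ∧
          x = hsNorm (J ∘ₗ J + LinearMap.id)},
          x ≤ Real.sqrt (Module.finrank ℝ V₁) * (1 + c * Ct ^ 2) := by
        rintro x ⟨T, J, hT1, hKap, rfl⟩
        -- coordinates of T are bounded by s⁻¹
        have hT1' : c * ∑ j, b.repr T j * b.repr T j = 1 := by
          simpa only [LinearMap.smul_apply, smul_eq_mul, hgv0] using hT1
        have htj : ∀ j, |b.repr T j| ≤ s⁻¹ := by
          intro j
          have h1 : b.repr T j * b.repr T j ≤ ∑ j', b.repr T j' * b.repr T j' :=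
            Finset.single_le_sum (fun j' _ => mul_self_nonneg (b.repr T j'))
              (Finset.mem_univ j)
          have hsum : ∑ j', b.repr T j' * b.repr T j' = c⁻¹ := by
            field_simp
            simp only [← sq] at hT1'; linarith [hT1']
          have h2 : b.repr T j * b.repr T j ≤ c⁻¹ := hsum ▸ h1
          have h3 : |b.repr T j| * |b.repr T j| ≤ s⁻¹ * s⁻¹ := by
            rw [abs_mul_abs_self]
            calc b.repr T j * b.repr T j ≤ c⁻¹ := h2
              _ = s⁻¹ * s⁻¹ := by rw [← hs2, mul_inv]
          nlinarith [h3, abs_nonneg (b.repr T j), inv_pos.mpr hs]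
        -- the Kaplan operator is small
        have hJop : ∀ U : V₁, ‖J U‖ ≤ s * Ct * ‖U‖ := by
          intro U
          have hinner : ∀ W : V₁, ⟪J U, W⟫ ≤ s * Ct * ‖U‖ * ‖W‖ := by
            intro W
            rw [hKap U W]
            simp only [LinearMap.smul_apply, smul_eq_mul, hgv0]
            have h1 : ∑ j, b.repr (β U W) j * b.repr T j ≤
                ∑ j, C j * ‖U‖ * ‖W‖ * s⁻¹ := by
              refine Finset.sum_le_sum fun j _ => ?_
              calc b.repr (β U W) j * b.repr T j
                  ≤ |b.repr (β U W) j * b.repr T j| := le_abs_self _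
                _ = |b.repr (β U W) j| * |b.repr T j| := abs_mul _ _
                _ ≤ (C j * ‖U‖ * ‖W‖) * s⁻¹ := by
                    exact mul_le_mul (hCb j U W) (htj j) (abs_nonneg _)
                      (mul_nonneg (mul_nonneg (hC0 j) (norm_nonneg U)) (norm_nonneg W))
            have h2 : ∑ j, C j * ‖U‖ * ‖W‖ * s⁻¹ = Ct * ‖U‖ * ‖W‖ * s⁻¹ := by
              rw [hCtdef, Finset.sum_mul, Finset.sum_mul, Finset.sum_mul]
            calc c * ∑ j, b.repr (β U W) j * b.repr T j
                ≤ c * (Ct * ‖U‖ * ‖W‖ * s⁻¹) := by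
                  rw [← h2]; exact mul_le_mul_of_nonneg_left h1 hc.le
              _ = s * Ct * ‖U‖ * ‖W‖ := by
                  rw [← hs2]; field_simp
          rcases eq_or_lt_of_le (norm_nonneg (J U)) with h0 | h0
          · rw [← h0]; positivity
          · have := hinner (J U)
            rw [real_inner_self_eq_norm_mul_norm] at this
            exact le_of_mul_le_mul_right (by linarith) h0
        -- HS norm bound
        have hcols : ∀ i, ‖(J ∘ₗ J + (LinearMap.id : V₁ →ₗ[ℝ] V₁)) (e i)‖ ≤ 1 + c * Ct ^ 2 := by
          intro i
          have he1 : ‖e i‖ = 1 := e.orthonormal.1 i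
          calc ‖(J ∘ₗ J + (LinearMap.id : V₁ →ₗ[ℝ] V₁)) (e i)‖ = ‖J (J (e i)) + e i‖ := by
                simp [LinearMap.add_apply, LinearMap.comp_apply]
            _ ≤ ‖J (J (e i))‖ + ‖e i‖ := norm_add_le _ _
            _ ≤ s * Ct * (s * Ct * ‖e i‖) + 1 := by
                refine add_le_add ?_ he1.le
                calc ‖J (J (e i))‖ ≤ s * Ct * ‖J (e i)‖ := hJop _
                  _ ≤ s * Ct * (s * Ct * ‖e i‖) :=
                      mul_le_mul_of_nonneg_left (hJop _) (by positivity)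
            _ = 1 + c * Ct ^ 2 := by rw [he1]; rw [← hs2]; ring
        exact hsNorm_le_of_forall e _ (by positivity) hcols
      have hsup : sSup {x : ℝ | ∃ T : V₂, ∃ J : V₁ →ₗ[ℝ] V₁,
          (c • gv₀) T T = 1 ∧ IsKaplan β (c • gv₀) T J ∧
          x = hsNorm (J ∘ₗ J + LinearMap.id)} ≤ Real.sqrt (Module.finrank ℝ V₁) * (1 + c * Ct ^ 2) :=
        Real.sSup_le hbound (by positivity)
      refine le_trans (mul_le_mul_of_nonneg_left hsup
        (inv_nonneg.mpr (Real.sqrt_nonneg _))) ?_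
      rw [← mul_assoc, inv_mul_cancel₀ (ne_of_gt hsqn), one_mul]
  -- conclude
  refine le_of_forall_pos_le_add fun ε hε => ?_
  obtain ⟨gv, hgv, hdev⟩ := key (ε / (Ct ^ 2 + 1)) (by positivity)
  have hmem : deviationOf β gv ∈ {d : ℝ | ∃ gv' : V₂ →ₗ[ℝ] V₂ →ₗ[ℝ] ℝ,
      IsVerticalMetric gv' ∧ d = deviationOf β gv'} := ⟨gv, hgv, rfl⟩
  have hle : deviation β ≤ deviationOf β gv :=
    csInf_le ⟨0, fun d hd => hDnonneg d hd⟩ hmem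
  have : ε / (Ct ^ 2 + 1) * Ct ^ 2 ≤ ε := by
    rw [div_mul_eq_mul_div, div_le_iff₀ (by positivity)]
    nlinarith [sq_nonneg Ct]
  linarith
end

section
/- Let k₁ ≤ k₂ ≤ ⋯ ≤ k_ℓ be positive integers with n = k₁+⋯+k_ℓ, and let (V₁, V₂, β) be the associated product-Heisenberg datum. Then its H-type deviation equals √(1 − k₁/n). -/
open scoped RealInnerProductSpace

/- ### Auxiliary lemmas -/

lemma hsNorm_diag {V : Type*} [NormedAddCommGroup V] [InnerProductSpace ℝ V]
    [FiniteDimensional ℝ V] {ι : Type*} [Fintype ι] [DecidableEq ι]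
    (b : OrthonormalBasis ι ℝ V) (A : V →ₗ[ℝ] V) (c : ι → ℝ)
    (h : ∀ i, A (b i) = c i • b i) :
    hsNorm A = Real.sqrt (∑ i, (c i)^2) := by
  have hadj : A = LinearMap.adjoint A := by
    rw [LinearMap.eq_adjoint_iff_basis b.toBasis b.toBasis]
    intro i j
    simp only [OrthonormalBasis.coe_toBasis, h, real_inner_smul_left, real_inner_smul_right]
    rcases eq_or_ne i j with rfl | hij
    · rfl
    · rw [b.orthonormal.2 hij]; ring
  have hAA : ∀ i, (LinearMap.adjoint A ∘ₗ A) (b i) = (c i)^2 • b i := by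
    intro i
    simp [h, ← hadj, map_smul, smul_smul, sq]
  unfold hsNorm
  congr 1
  rw [LinearMap.trace_eq_matrix_trace ℝ b.toBasis, Matrix.trace]
  simp only [Matrix.diag]
  refine Finset.sum_congr rfl fun i _ => ?_
  rw [LinearMap.toMatrix_apply]
  simp [hAA i]

lemma gv_cs {V₂ : Type*} [AddCommGroup V₂] [Module ℝ V₂]
    (gv : V₂ →ₗ[ℝ] V₂ →ₗ[ℝ] ℝ) (hgv : IsVerticalMetric gv)
    (S T : V₂) (hT : gv T T = 1) : (gv S T)^2 ≤ gv S S := by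
  by_cases h : S - (gv S T) • T = 0
  · rw [sub_eq_zero] at h
    rw [h]
    simp [map_smul, smul_eq_mul, hT]
    nlinarith [sq_nonneg (gv S T)]
  · have hpos := hgv.2 _ h
    have hsymm := hgv.1 T S
    simp only [map_sub, map_smul, LinearMap.sub_apply, LinearMap.smul_apply,
      smul_eq_mul] at hpos
    rw [hsymm, hT] at hpos
    nlinarith [hpos]

section Helpers

variable {V₁ V₂ : Type*} [NormedAddCommGroup V₁] [InnerProductSpace ℝ V₁]
  [FiniteDimensional ℝ V₁] [AddCommGroup V₂] [Module ℝ V₂] [FiniteDimensional ℝ V₂]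
  {ℓ : ℕ} {k : Fin ℓ → ℕ}
  {β : V₁ →ₗ[ℝ] V₁ →ₗ[ℝ] V₂}
  {b : OrthonormalBasis ((Σ i : Fin ℓ, Fin (k i)) ⊕ (Σ i : Fin ℓ, Fin (k i))) ℝ V₁}
  {t : Module.Basis (Fin ℓ) ℝ V₂}

omit [FiniteDimensional ℝ V₁] [FiniteDimensional ℝ V₂] in
lemma skew (halt : ∀ X : V₁, β X X = 0) (X Y : V₁) : β Y X = -β X Y := by
  have h := halt (X + Y)
  simp only [map_add, LinearMap.add_apply, halt] at h
  rw [eq_neg_iff_add_eq_zero]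
  rw [zero_add, add_zero] at h
  exact h

omit [FiniteDimensional ℝ V₁] [FiniteDimensional ℝ V₂] in
lemma kaplan_key (gv : V₂ →ₗ[ℝ] V₂ →ₗ[ℝ] ℝ) (T : V₂) (J : V₁ →ₗ[ℝ] V₁)
    (hJ : IsKaplan β gv T J) (x : V₁) :
    J x = ∑ w, (gv (β x (b w)) T) • b w := by
  conv_lhs => rw [← b.sum_repr (J x)]
  refine Finset.sum_congr rfl fun w _ => ?_
  rw [b.repr_apply_apply, real_inner_comm, hJ]

omit [FiniteDimensional ℝ V₁] [FiniteDimensional ℝ V₂] in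
lemma kaplan_diag
    (halt : ∀ X : V₁, β X X = 0)
    (hXY : ∀ s : Σ i : Fin ℓ, Fin (k i), β (b (Sum.inl s)) (b (Sum.inr s)) = t s.1)
    (hXY' : ∀ s s' : Σ i : Fin ℓ, Fin (k i), s ≠ s' →
      β (b (Sum.inl s)) (b (Sum.inr s')) = 0)
    (hXX : ∀ s s' : Σ i : Fin ℓ, Fin (k i), β (b (Sum.inl s)) (b (Sum.inl s')) = 0)
    (hYY : ∀ s s' : Σ i : Fin ℓ, Fin (k i), β (b (Sum.inr s)) (b (Sum.inr s')) = 0)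
    (gv : V₂ →ₗ[ℝ] V₂ →ₗ[ℝ] ℝ) (T : V₂) (J : V₁ →ₗ[ℝ] V₁)
    (hJ : IsKaplan β gv T J) :
    (∀ s, J (b (Sum.inl s)) = (gv (t s.1) T) • b (Sum.inr s)) ∧
    (∀ s, J (b (Sum.inr s)) = -(gv (t s.1) T) • b (Sum.inl s)) := by
  constructor <;> intro s <;> rw [kaplan_key gv T J hJ, Fintype.sum_sum_type]
  · have h1 : ∑ s' : Σ i : Fin ℓ, Fin (k i),
        (gv (β (b (Sum.inl s)) (b (Sum.inl s'))) T) • b (Sum.inl s') = 0 := by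
      simp [hXX]
    have h2 : ∑ s' : Σ i : Fin ℓ, Fin (k i),
        (gv (β (b (Sum.inl s)) (b (Sum.inr s'))) T) • b (Sum.inr s')
        = (gv (t s.1) T) • b (Sum.inr s) := by
      rw [Finset.sum_eq_single s]
      · rw [hXY]
      · intro s' _ hne
        rw [hXY' s s' (Ne.symm hne)]; simp
      · intro h; exact absurd (Finset.mem_univ s) h
    rw [h1, h2, zero_add]
  · have h1 : ∑ s' : Σ i : Fin ℓ, Fin (k i),
        (gv (β (b (Sum.inr s)) (b (Sum.inl s'))) T) • b (Sum.inl s')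
        = -(gv (t s.1) T) • b (Sum.inl s) := by
      rw [Finset.sum_eq_single s]
      · rw [skew halt (b (Sum.inl s)) (b (Sum.inr s)), hXY]; simp
      · intro s' _ hne
        rw [skew halt (b (Sum.inl s')) (b (Sum.inr s)), hXY' s' s hne]; simp
      · intro h; exact absurd (Finset.mem_univ s) h
    have h2 : ∑ s' : Σ i : Fin ℓ, Fin (k i),
        (gv (β (b (Sum.inr s)) (b (Sum.inr s'))) T) • b (Sum.inr s') = 0 := by
      simp [hYY]
    rw [h1, h2, add_zero]

omit [FiniteDimensional ℝ V₁] [FiniteDimensional ℝ V₂] in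
lemma kaplan_exists
    (halt : ∀ X : V₁, β X X = 0)
    (hXY : ∀ s : Σ i : Fin ℓ, Fin (k i), β (b (Sum.inl s)) (b (Sum.inr s)) = t s.1)
    (hXY' : ∀ s s' : Σ i : Fin ℓ, Fin (k i), s ≠ s' →
      β (b (Sum.inl s)) (b (Sum.inr s')) = 0)
    (hXX : ∀ s s' : Σ i : Fin ℓ, Fin (k i), β (b (Sum.inl s)) (b (Sum.inl s')) = 0)
    (hYY : ∀ s s' : Σ i : Fin ℓ, Fin (k i), β (b (Sum.inr s)) (b (Sum.inr s')) = 0)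
    (gv : V₂ →ₗ[ℝ] V₂ →ₗ[ℝ] ℝ) (T : V₂) :
    ∃ J : V₁ →ₗ[ℝ] V₁, IsKaplan β gv T J := by
  classical
  set J : V₁ →ₗ[ℝ] V₁ := b.toBasis.constr ℝ
    (Sum.elim (fun s => (gv (t s.1) T) • b (Sum.inr s))
      (fun s => -((gv (t s.1) T)) • b (Sum.inl s))) with hJdef
  refine ⟨J, ?_⟩
  have hJl : ∀ s, J (b (Sum.inl s)) = (gv (t s.1) T) • b (Sum.inr s) := by
    intro s
    have : b (Sum.inl s) = b.toBasis (Sum.inl s) := by simp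
    rw [this, hJdef, Module.Basis.constr_basis]
    rfl
  have hJr : ∀ s, J (b (Sum.inr s)) = -((gv (t s.1) T)) • b (Sum.inl s) := by
    intro s
    have : b (Sum.inr s) = b.toBasis (Sum.inr s) := by simp
    rw [this, hJdef, Module.Basis.constr_basis]
    rfl
  have hite : ∀ w w', ⟪b w, b w'⟫ = if w = w' then (1:ℝ) else 0 :=
    orthonormal_iff_ite.mp b.orthonormal
  have hbas : ∀ w w', ⟪J (b w), b w'⟫ = gv (β (b w) (b w')) T := by
    rintro (s | s) (s' | s')
    · rw [hXX, hJl, real_inner_smul_left, hite]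
      simp
    · rw [hJl, real_inner_smul_left, hite]
      rcases eq_or_ne s s' with rfl | hne
      · rw [hXY]; simp
      · rw [hXY' s s' hne]
        simp [hne]
    · rw [hJr, real_inner_smul_left, hite,
        skew halt (b (Sum.inl s')) (b (Sum.inr s))]
      rcases eq_or_ne s s' with rfl | hne
      · rw [hXY]; simp
      · rw [hXY' s' s (Ne.symm hne)]
        simp [hne]
    · rw [hYY, hJr, real_inner_smul_left, hite]
      simp
  intro U W
  have hB : ((innerₗ V₁).compl₁₂ J LinearMap.id : V₁ →ₗ[ℝ] V₁ →ₗ[ℝ] ℝ)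
      = LinearMap.compr₂ β (gv.flip T) := by
    apply b.toBasis.ext
    intro w
    apply b.toBasis.ext
    intro w'
    simpa using hbas w w'
  have := LinearMap.congr_fun (LinearMap.congr_fun hB U) W
  simpa using this

lemma kaplan_hsNorm
    (halt : ∀ X : V₁, β X X = 0)
    (hXY : ∀ s : Σ i : Fin ℓ, Fin (k i), β (b (Sum.inl s)) (b (Sum.inr s)) = t s.1)
    (hXY' : ∀ s s' : Σ i : Fin ℓ, Fin (k i), s ≠ s' →
      β (b (Sum.inl s)) (b (Sum.inr s')) = 0)
    (hXX : ∀ s s' : Σ i : Fin ℓ, Fin (k i), β (b (Sum.inl s)) (b (Sum.inl s')) = 0)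
    (hYY : ∀ s s' : Σ i : Fin ℓ, Fin (k i), β (b (Sum.inr s)) (b (Sum.inr s')) = 0)
    (gv : V₂ →ₗ[ℝ] V₂ →ₗ[ℝ] ℝ) (T : V₂) (J : V₁ →ₗ[ℝ] V₁)
    (hJ : IsKaplan β gv T J) :
    hsNorm (J ∘ₗ J + LinearMap.id)
      = Real.sqrt (∑ i, 2 * (k i : ℝ) * (1 - (gv (t i) T)^2)^2) := by
  classical
  obtain ⟨hl, hr⟩ := kaplan_diag halt hXY hXY' hXX hYY gv T J hJ
  set c : ((Σ i : Fin ℓ, Fin (k i)) ⊕ (Σ i : Fin ℓ, Fin (k i))) → ℝ :=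
    Sum.elim (fun s => 1 - (gv (t s.1) T)^2) (fun s => 1 - (gv (t s.1) T)^2) with hc
  have hdiag : ∀ w, (J ∘ₗ J + (LinearMap.id : V₁ →ₗ[ℝ] V₁)) (b w) = c w • b w := by
    rintro (s | s) <;>
      simp only [LinearMap.add_apply, LinearMap.comp_apply, LinearMap.id_apply, hl, hr,
        map_smul, smul_smul, hc, Sum.elim_inl, Sum.elim_inr] <;>
    · module
  rw [hsNorm_diag b _ c hdiag]
  congr 1
  rw [Fintype.sum_sum_type]
  have hσ : ∀ f : (Σ i : Fin ℓ, Fin (k i)) → ℝ,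
      (∑ s : Σ i : Fin ℓ, Fin (k i), f s) = ∑ i, ∑ j : Fin (k i), f ⟨i, j⟩ := by
    intro f
    rw [Finset.sum_sigma', Finset.univ_sigma_univ]
  simp only [hc, Sum.elim_inl, Sum.elim_inr, hσ]
  rw [← Finset.sum_add_distrib]
  refine Finset.sum_congr rfl fun i _ => ?_
  simp [Finset.sum_const]
  ring

lemma kaplan_set_eq
    (halt : ∀ X : V₁, β X X = 0)
    (hXY : ∀ s : Σ i : Fin ℓ, Fin (k i), β (b (Sum.inl s)) (b (Sum.inr s)) = t s.1)
    (hXY' : ∀ s s' : Σ i : Fin ℓ, Fin (k i), s ≠ s' →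
      β (b (Sum.inl s)) (b (Sum.inr s')) = 0)
    (hXX : ∀ s s' : Σ i : Fin ℓ, Fin (k i), β (b (Sum.inl s)) (b (Sum.inl s')) = 0)
    (hYY : ∀ s s' : Σ i : Fin ℓ, Fin (k i), β (b (Sum.inr s)) (b (Sum.inr s')) = 0)
    (gv : V₂ →ₗ[ℝ] V₂ →ₗ[ℝ] ℝ) :
    {x : ℝ | ∃ T : V₂, ∃ J : V₁ →ₗ[ℝ] V₁,
      gv T T = 1 ∧ IsKaplan β gv T J ∧ x = hsNorm (J ∘ₗ J + LinearMap.id)}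
    = {x : ℝ | ∃ T : V₂, gv T T = 1 ∧
        x = Real.sqrt (∑ i, 2 * (k i : ℝ) * (1 - (gv (t i) T)^2)^2)} := by
  ext x
  constructor
  · rintro ⟨T, J, hT, hJ, rfl⟩
    exact ⟨T, hT, kaplan_hsNorm halt hXY hXY' hXX hYY gv T J hJ⟩
  · rintro ⟨T, hT, rfl⟩
    obtain ⟨J, hJ⟩ := kaplan_exists halt hXY hXY' hXX hYY gv T
    exact ⟨T, J, hT, hJ, (kaplan_hsNorm halt hXY hXY' hXX hYY gv T J hJ).symm⟩

end Helpers

set_option maxHeartbeats 1000000 in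
/-- The H-type deviation of the product of Heisenberg groups
`ℍ^{k₁} × ⋯ × ℍ^{k_ℓ}` equals `√(1 - k₁/n)` where `n = k₁ + ⋯ + k_ℓ`. -/
theorem h_type_deviation_product_heisenberg {V₁ V₂ : Type*} [NormedAddCommGroup V₁]
    [InnerProductSpace ℝ V₁] [FiniteDimensional ℝ V₁]
    [AddCommGroup V₂] [Module ℝ V₂] [FiniteDimensional ℝ V₂]
    (ℓ : ℕ) (hℓ : 0 < ℓ) (k : Fin ℓ → ℕ) (hk : ∀ i, 0 < k i) (hmono : Monotone k)
    (n : ℕ) (hn : n = ∑ i, k i)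
    (β : V₁ →ₗ[ℝ] V₁ →ₗ[ℝ] V₂)
    (halt : ∀ X : V₁, β X X = 0)
    (b : OrthonormalBasis ((Σ i : Fin ℓ, Fin (k i)) ⊕ (Σ i : Fin ℓ, Fin (k i))) ℝ V₁)
    (t : Module.Basis (Fin ℓ) ℝ V₂)
    (hXY : ∀ s : Σ i : Fin ℓ, Fin (k i), β (b (Sum.inl s)) (b (Sum.inr s)) = t s.1)
    (hXY' : ∀ s s' : Σ i : Fin ℓ, Fin (k i), s ≠ s' →
      β (b (Sum.inl s)) (b (Sum.inr s')) = 0)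
    (hXX : ∀ s s' : Σ i : Fin ℓ, Fin (k i), β (b (Sum.inl s)) (b (Sum.inl s')) = 0)
    (hYY : ∀ s s' : Σ i : Fin ℓ, Fin (k i), β (b (Sum.inr s)) (b (Sum.inr s')) = 0) :
    deviation β = Real.sqrt (1 - (k ⟨0, hℓ⟩ : ℝ) / n) := by
  classical
  set i0 : Fin ℓ := ⟨0, hℓ⟩ with hi0
  have hcast_n : (n : ℝ) = ∑ i, (k i : ℝ) := by rw [hn]; push_cast; rfl
  have hk0n : (k i0 : ℝ) ≤ (n : ℝ) := by
    rw [hcast_n]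
    exact Finset.single_le_sum (f := fun i => (k i : ℝ)) (fun i _ => by positivity)
      (Finset.mem_univ i0)
  have hnpos : 0 < n := by
    rw [hn]
    exact Finset.sum_pos (fun i _ => hk i) ⟨i0, Finset.mem_univ i0⟩
  have hnRpos : (0:ℝ) < n := by exact_mod_cast hnpos
  have hnne : (n:ℝ) ≠ 0 := ne_of_gt hnRpos
  have hrk1 : Module.finrank ℝ V₁ = 2 * n := by
    rw [Module.finrank_eq_card_basis b.toBasis, Fintype.card_sum]
    have hcs : Fintype.card (Σ i : Fin ℓ, Fin (k i)) = ∑ i, k i := by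
      simp [Fintype.card_sigma]
    rw [hcs, hn]; ring
  have hrk2 : Module.finrank ℝ V₂ = ℓ := by
    rw [Module.finrank_eq_card_basis t, Fintype.card_fin]
  have hkmin : ∀ i, (k i0 : ℝ) ≤ (k i : ℝ) := by
    intro i
    exact_mod_cast hmono (by rw [Fin.le_def]; exact Nat.zero_le _)
  set r : ℝ := Real.sqrt (1 - (k i0 : ℝ) / n) with hr
  -- arithmetic identity
  have harith : (Real.sqrt (Module.finrank ℝ V₁))⁻¹ *
      Real.sqrt (2*(n:ℝ) - 2*(k i0:ℝ)) = r := by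
    rw [hrk1, hr]
    have h2n : ((2*n : ℕ):ℝ) = 2*(n:ℝ) := by push_cast; ring
    rw [h2n, ← Real.sqrt_inv, ← Real.sqrt_mul (by positivity)]
    congr 1
    field_simp
  -- the deviation relative to any vertical metric, described explicitly
  have hdev : ∀ gv : V₂ →ₗ[ℝ] V₂ →ₗ[ℝ] ℝ, deviationOf β gv
      = (Real.sqrt (Module.finrank ℝ V₁))⁻¹ *
        sSup {x : ℝ | ∃ T : V₂, gv T T = 1 ∧
          x = Real.sqrt (∑ i, 2 * (k i : ℝ) * (1 - (gv (t i) T)^2)^2)} := by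
    intro gv
    unfold deviationOf
    rw [kaplan_set_eq halt hXY hXY' hXX hYY gv]
  -- boundedness of the sup set
  have hbdd : ∀ gv : V₂ →ₗ[ℝ] V₂ →ₗ[ℝ] ℝ, IsVerticalMetric gv →
      BddAbove {x : ℝ | ∃ T : V₂, gv T T = 1 ∧
        x = Real.sqrt (∑ i, 2 * (k i : ℝ) * (1 - (gv (t i) T)^2)^2)} := by
    intro gv hgv
    refine ⟨Real.sqrt (∑ i, 2*(k i:ℝ)*(1 + gv (t i) (t i))^2), ?_⟩
    rintro x ⟨T, hT, rfl⟩
    apply Real.sqrt_le_sqrt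
    refine Finset.sum_le_sum fun i _ => ?_
    have hcs := gv_cs gv hgv (t i) T hT
    have hC : 0 ≤ gv (t i) (t i) := le_of_lt (hgv.2 _ (t.ne_zero i))
    have hkc : (0:ℝ) ≤ (k i : ℝ) := Nat.cast_nonneg _
    nlinarith [hcs, hC, sq_nonneg (gv (t i) T), hkc,
      mul_nonneg hkc (mul_nonneg (by nlinarith [sq_nonneg (gv (t i) T)] :
        (0:ℝ) ≤ 2 + gv (t i) (t i) - (gv (t i) T)^2)
        (by nlinarith [sq_nonneg (gv (t i) T)] :
          (0:ℝ) ≤ gv (t i) (t i) + (gv (t i) T)^2))]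
  -- lower bound of the sup for any vertical metric
  have hlow : ∀ gv : V₂ →ₗ[ℝ] V₂ →ₗ[ℝ] ℝ, IsVerticalMetric gv →
      Real.sqrt (2*(n:ℝ) - 2*(k i0:ℝ)) ≤
      sSup {x : ℝ | ∃ T : V₂, gv T T = 1 ∧
        x = Real.sqrt (∑ i, 2 * (k i : ℝ) * (1 - (gv (t i) T)^2)^2)} := by
    intro gv hgv
    obtain ⟨T, hT1, hT0⟩ : ∃ T : V₂, gv T T = 1 ∧ ∀ j, j ≠ i0 → gv (t j) T = 0 := by
      set Φ : V₂ →ₗ[ℝ] ({j : Fin ℓ // j ≠ i0} → ℝ) := LinearMap.pi fun j => gv (t j.1)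
        with hΦ
      have hker : LinearMap.ker Φ ≠ ⊥ := by
        intro hbot
        have h1 := LinearMap.finrank_range_add_finrank_ker Φ
        rw [hbot, finrank_bot, add_zero, hrk2] at h1
        have h2 : Module.finrank ℝ (LinearMap.range Φ)
            ≤ Fintype.card {j : Fin ℓ // j ≠ i0} := by
          have h := Submodule.finrank_le (LinearMap.range Φ)
          rwa [Module.finrank_fintype_fun_eq_card] at h
        have h3 : Fintype.card {j : Fin ℓ // j ≠ i0} < ℓ := by
          have h := Fintype.card_subtype_lt (p := fun j : Fin ℓ => j ≠ i0)
            (x := i0) (by simp)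
          simpa using h
        omega
      obtain ⟨T₀, hT₀mem, hT₀ne⟩ := (Submodule.ne_bot_iff _).mp hker
      have hzero : ∀ j, j ≠ i0 → gv (t j) T₀ = 0 := by
        intro j hj
        have hΦ0 : Φ T₀ = 0 := LinearMap.mem_ker.mp hT₀mem
        have := congrFun hΦ0 ⟨j, hj⟩
        simpa [hΦ, LinearMap.pi_apply] using this
      have hc : 0 < gv T₀ T₀ := hgv.2 _ hT₀ne
      refine ⟨(Real.sqrt (gv T₀ T₀))⁻¹ • T₀, ?_, ?_⟩
      · simp only [map_smul, LinearMap.smul_apply, smul_eq_mul]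
        rw [← mul_assoc, ← mul_inv, Real.mul_self_sqrt hc.le,
          inv_mul_cancel₀ hc.ne']
      · intro j hj
        rw [map_smul, smul_eq_mul, hzero j hj, mul_zero]
    have hmem : Real.sqrt (∑ i, 2 * (k i : ℝ) * (1 - (gv (t i) T)^2)^2)
        ∈ {x : ℝ | ∃ T : V₂, gv T T = 1 ∧
          x = Real.sqrt (∑ i, 2 * (k i : ℝ) * (1 - (gv (t i) T)^2)^2)} :=
      ⟨T, hT1, rfl⟩
    refine le_trans ?_ (le_csSup (hbdd gv hgv) hmem)
    apply Real.sqrt_le_sqrt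
    have hsum : ∑ i, (2*(k i:ℝ) - if i = i0 then 2*(k i:ℝ) else 0)
        = 2*(n:ℝ) - 2*(k i0:ℝ) := by
      rw [Finset.sum_sub_distrib, Finset.sum_ite_eq' Finset.univ i0
        (fun i => 2*(k i:ℝ)), if_pos (Finset.mem_univ i0), hcast_n, Finset.mul_sum]
    rw [← hsum]
    refine Finset.sum_le_sum fun i _ => ?_
    by_cases hii : i = i0
    · subst hii
      have h4 : (if i0 = i0 then 2*(k i0:ℝ) else 0) = 2*(k i0:ℝ) := if_pos rfl
      rw [h4, sub_self]
      positivity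
    · rw [if_neg hii, hT0 i hii, sub_zero]
      norm_num
  -- the optimal metric: the one making `t` orthonormal
  set gv₀ : V₂ →ₗ[ℝ] V₂ →ₗ[ℝ] ℝ := ∑ i, (t.coord i).smulRight (t.coord i) with hgv₀
  have gv₀app : ∀ S T : V₂, gv₀ S T = ∑ i, t.repr S i * t.repr T i := by
    intro S T
    simp [hgv₀, LinearMap.sum_apply, LinearMap.smulRight_apply, Module.Basis.coord_apply,
      smul_eq_mul]
  have hVM : IsVerticalMetric gv₀ := by
    constructor
    · intro S T
      rw [gv₀app, gv₀app]
      exact Finset.sum_congr rfl fun i _ => mul_comm _ _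
    · intro T hT
      rw [gv₀app]
      have hne : ∃ i, t.repr T i ≠ 0 := by
        by_contra h
        push_neg at h
        exact hT (by
          have h0 : t.repr T = 0 := by ext i; exact h i
          simpa using t.repr.map_eq_zero_iff.mp h0)
      obtain ⟨i, hi⟩ := hne
      exact Finset.sum_pos' (fun j _ => mul_self_nonneg _)
        ⟨i, Finset.mem_univ i, mul_self_pos.mpr hi⟩
  have ha0 : ∀ (T : V₂) (i : Fin ℓ), gv₀ (t i) T = t.repr T i := by
    intro T i
    rw [gv₀app, Finset.sum_eq_single i]
    · simp [Module.Basis.repr_self]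
    · intro j _ hj
      simp [Module.Basis.repr_self, Finsupp.single_apply, Ne.symm hj]
    · intro h; exact absurd (Finset.mem_univ i) h
  have hub : ∀ x ∈ {x : ℝ | ∃ T : V₂, gv₀ T T = 1 ∧
      x = Real.sqrt (∑ i, 2 * (k i : ℝ) * (1 - (gv₀ (t i) T)^2)^2)},
      x ≤ Real.sqrt (2*(n:ℝ) - 2*(k i0:ℝ)) := by
    rintro x ⟨T, hT1, rfl⟩
    apply Real.sqrt_le_sqrt
    set s : Fin ℓ → ℝ := fun i => (t.repr T i)^2 with hs
    have hs1 : ∑ i, s i = 1 := by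
      rw [← hT1, gv₀app]
      exact Finset.sum_congr rfl fun i _ => (sq (t.repr T i) : _)
    have hsnn : ∀ i, 0 ≤ s i := fun i => sq_nonneg _
    have hsle : ∀ i, s i ≤ 1 := fun i =>
      hs1 ▸ Finset.single_le_sum (fun j _ => hsnn j) (Finset.mem_univ i)
    calc ∑ i, 2*(k i:ℝ)*(1 - (gv₀ (t i) T)^2)^2
        = ∑ i, 2*(k i:ℝ)*(1 - s i)^2 := by
          refine Finset.sum_congr rfl fun i _ => ?_
          rw [ha0 T i]
      _ ≤ ∑ i, (2*(k i:ℝ) - 2*(k i:ℝ)*(s i)) := by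
          refine Finset.sum_le_sum fun i _ => ?_
          have hkc : (0:ℝ) ≤ (k i : ℝ) := Nat.cast_nonneg _
          nlinarith [hsnn i, hsle i, hkc,
            mul_nonneg hkc (mul_nonneg (hsnn i) (by linarith [hsle i] : (0:ℝ) ≤ 1 - s i))]
      _ = (∑ i, 2*(k i:ℝ)) - ∑ i, 2*(k i:ℝ)*(s i) := by
          rw [Finset.sum_sub_distrib]
      _ ≤ 2*(n:ℝ) - 2*(k i0:ℝ) := by
          have h1 : (∑ i, 2*(k i:ℝ)) = 2*(n:ℝ) := by
            rw [hcast_n, Finset.mul_sum]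
          have h2 : ∑ i, 2*(k i0:ℝ)*(s i) = 2*(k i0:ℝ) := by
            rw [← Finset.mul_sum, hs1, mul_one]
          have h3 : ∑ i, 2*(k i0:ℝ)*(s i) ≤ ∑ i, 2*(k i:ℝ)*(s i) := by
            refine Finset.sum_le_sum fun i _ => ?_
            nlinarith [hkmin i, hsnn i]
          linarith
  have hmem0 : Real.sqrt (2*(n:ℝ) - 2*(k i0:ℝ))
      ∈ {x : ℝ | ∃ T : V₂, gv₀ T T = 1 ∧
        x = Real.sqrt (∑ i, 2 * (k i : ℝ) * (1 - (gv₀ (t i) T)^2)^2)} := by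
    refine ⟨t i0, ?_, ?_⟩
    · rw [ha0]
      simp [Module.Basis.repr_self]
    · congr 1
      have hterm : ∀ i, 2 * (k i : ℝ) * (1 - (gv₀ (t i) (t i0))^2)^2
          = 2*(k i:ℝ) - (if i = i0 then 2*(k i:ℝ) else 0) := by
        intro i
        rw [ha0]
        by_cases hii : i = i0
        · subst hii
          simp [Module.Basis.repr_self]
        · simp [Module.Basis.repr_self, Finsupp.single_apply, Ne.symm hii, hii]
      rw [Finset.sum_congr rfl fun i _ => hterm i, Finset.sum_sub_distrib,
        Finset.sum_ite_eq' Finset.univ i0 (fun i => 2*(k i:ℝ)),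
        if_pos (Finset.mem_univ i0), hcast_n, Finset.mul_sum]
  have hsSup0 : sSup {x : ℝ | ∃ T : V₂, gv₀ T T = 1 ∧
      x = Real.sqrt (∑ i, 2 * (k i : ℝ) * (1 - (gv₀ (t i) T)^2)^2)}
      = Real.sqrt (2*(n:ℝ) - 2*(k i0:ℝ)) :=
    le_antisymm (csSup_le ⟨_, hmem0⟩ hub) (le_csSup (hbdd gv₀ hVM) hmem0)
  have hdev0 : deviationOf β gv₀ = r := by
    rw [hdev gv₀, hsSup0, harith]
  have hlowdev : ∀ gv : V₂ →ₗ[ℝ] V₂ →ₗ[ℝ] ℝ, IsVerticalMetric gv →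
      r ≤ deviationOf β gv := by
    intro gv hgv
    rw [hdev gv, ← harith]
    exact mul_le_mul_of_nonneg_left (hlow gv hgv)
      (inv_nonneg.mpr (Real.sqrt_nonneg _))
  unfold deviation
  apply le_antisymm
  · exact csInf_le ⟨r, by rintro d ⟨gv, hgv, rfl⟩; exact hlowdev gv hgv⟩
      ⟨gv₀, hVM, hdev0.symm⟩
  · exact le_csInf ⟨_, ⟨gv₀, hVM, hdev0.symm⟩⟩
      (by rintro d ⟨gv, hgv, rfl⟩; exact hlowdev gv hgv)
end

section
/- Let k₁ ≤ k₂ ≤ ⋯ ≤ k_ℓ be positive integers with n = k₁+⋯+k_ℓ, and let (V₁, V₂, β) be the associated product-Heisenberg datum. Then the square of its H-type deviation equals the min-max value inf over invertible real ℓ×ℓ matrices M of sup over u ∈ ℝ^ℓ with ‖u‖₂ = 1 of Σ_{i=1}^ℓ (k_i/n)·(1 − (Mu)_i²)². -/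
open scoped RealInnerProductSpace

/-! ### Auxiliary lemmas -/

open scoped Matrix

section AuxReal

lemma aux_csSup_image {c : ℝ} (hc : 0 ≤ c) {W : Set ℝ} (hne : W.Nonempty) (hbdd : BddAbove W) :
    sSup ((fun w => c * Real.sqrt w) '' W) = c * Real.sqrt (sSup W) := by
  have hmono : Monotone (fun w => c * Real.sqrt w) :=
    fun a b h => mul_le_mul_of_nonneg_left (Real.sqrt_le_sqrt h) hc
  have hcont : ContinuousAt (fun w => c * Real.sqrt w) (sSup W) :=
    (continuous_const.mul Real.continuous_sqrt).continuousAt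
  exact (hmono.map_csSup_of_continuousAt hcont hne hbdd).symm

lemma aux_csInf_image {E : Set ℝ} (hne : E.Nonempty) (hbdd : BddBelow E) :
    sInf (Real.sqrt '' E) = Real.sqrt (sInf E) := by
  have hmono : Monotone Real.sqrt := fun a b h => Real.sqrt_le_sqrt h
  exact (hmono.map_csInf_of_continuousAt Real.continuous_sqrt.continuousAt hne hbdd).symm

lemma aux_sphere_compact (ℓ : ℕ) : IsCompact {u : Fin ℓ → ℝ | ∑ i, u i ^ 2 = 1} := by
  have hcont : Continuous (fun u : Fin ℓ → ℝ => ∑ i, u i ^ 2) := by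
    exact continuous_finset_sum _ fun i _ => (continuous_apply i).pow 2
  refine Metric.isCompact_of_isClosed_isBounded ?_ ?_
  · exact isClosed_eq hcont continuous_const
  · rw [Metric.isBounded_iff_subset_closedBall 0]
    refine ⟨1, fun u hu => ?_⟩
    simp only [Metric.mem_closedBall, dist_zero_right]
    rw [pi_norm_le_iff_of_nonneg zero_le_one]
    intro i
    rw [Real.norm_eq_abs, abs_le_one_iff_mul_self_le_one, ← sq]
    calc u i ^ 2 ≤ ∑ j, u j ^ 2 :=
          Finset.single_le_sum (fun j _ => sq_nonneg (u j)) (Finset.mem_univ i)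
      _ = 1 := hu

lemma aux_U_props (ℓ : ℕ) (hℓ : 0 < ℓ) (k : Fin ℓ → ℕ) (n : ℕ)
    (M : Matrix (Fin ℓ) (Fin ℓ) ℝ) :
    ({x : ℝ | ∃ u : Fin ℓ → ℝ, ∑ i, u i ^ 2 = 1 ∧
        x = ∑ i, ((k i : ℝ) / n) * (1 - (M.mulVec u i) ^ 2) ^ 2}).Nonempty ∧
    BddAbove {x : ℝ | ∃ u : Fin ℓ → ℝ, ∑ i, u i ^ 2 = 1 ∧
        x = ∑ i, ((k i : ℝ) / n) * (1 - (M.mulVec u i) ^ 2) ^ 2} ∧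
    ∀ x ∈ {x : ℝ | ∃ u : Fin ℓ → ℝ, ∑ i, u i ^ 2 = 1 ∧
        x = ∑ i, ((k i : ℝ) / n) * (1 - (M.mulVec u i) ^ 2) ^ 2}, 0 ≤ x := by
  have hsph : (Pi.single (⟨0, hℓ⟩ : Fin ℓ) (1:ℝ)) ∈ {u : Fin ℓ → ℝ | ∑ i, u i ^ 2 = 1} := by
    simp [Pi.single_apply, Finset.sum_ite_eq']
  have hfc : Continuous (fun u : Fin ℓ → ℝ =>
      ∑ i, ((k i : ℝ) / n) * (1 - (M.mulVec u i) ^ 2) ^ 2) := by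
    refine continuous_finset_sum _ fun i _ => Continuous.mul continuous_const ?_
    have hmv : Continuous fun u : Fin ℓ → ℝ => M.mulVec u i := by
      have : Continuous (M.mulVecLin : (Fin ℓ → ℝ) →ₗ[ℝ] (Fin ℓ → ℝ)) :=
        LinearMap.continuous_of_finiteDimensional _
      exact (continuous_apply i).comp this
    exact ((continuous_const.sub (hmv.pow 2)).pow 2)
  have himg : {x : ℝ | ∃ u : Fin ℓ → ℝ, ∑ i, u i ^ 2 = 1 ∧
        x = ∑ i, ((k i : ℝ) / n) * (1 - (M.mulVec u i) ^ 2) ^ 2} =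
      (fun u : Fin ℓ → ℝ => ∑ i, ((k i : ℝ) / n) * (1 - (M.mulVec u i) ^ 2) ^ 2) ''
        {u : Fin ℓ → ℝ | ∑ i, u i ^ 2 = 1} := by
    ext x; constructor
    · rintro ⟨u, hu, rfl⟩; exact ⟨u, hu, rfl⟩
    · rintro ⟨u, hu, rfl⟩; exact ⟨u, hu, rfl⟩
  refine ⟨⟨_, ⟨_, hsph, rfl⟩⟩, ?_, ?_⟩
  · rw [himg]
    exact ((aux_sphere_compact ℓ).image hfc).bddAbove
  · rintro x ⟨u, hu, rfl⟩
    exact Finset.sum_nonneg fun i _ =>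
      mul_nonneg (div_nonneg (Nat.cast_nonneg _) (Nat.cast_nonneg _)) (sq_nonneg _)

lemma aux_W_eq_U (ℓ : ℕ) (k : Fin ℓ → ℕ) (n : ℕ) (M : Matrix (Fin ℓ) (Fin ℓ) ℝ)
    (hM : IsUnit M) :
    {x : ℝ | ∃ c : Fin ℓ → ℝ, c ⬝ᵥ ((M * M.transpose) *ᵥ c) = 1 ∧
        x = ∑ i, ((k i : ℝ) / n) * (1 - (((M * M.transpose) *ᵥ c) i) ^ 2) ^ 2} =
    {x : ℝ | ∃ u : Fin ℓ → ℝ, ∑ i, u i ^ 2 = 1 ∧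
        x = ∑ i, ((k i : ℝ) / n) * (1 - (M.mulVec u i) ^ 2) ^ 2} := by
  have hdetT : IsUnit M.transpose.det := by
    rw [Matrix.det_transpose]; exact (Matrix.isUnit_iff_isUnit_det M).mp hM
  have hinv : ∀ u : Fin ℓ → ℝ, M.transpose *ᵥ ((M.transpose)⁻¹ *ᵥ u) = u := by
    intro u
    rw [Matrix.mulVec_mulVec, Matrix.mul_nonsing_inv _ hdetT, Matrix.one_mulVec]
  have key : ∀ c : Fin ℓ → ℝ, (M * M.transpose) *ᵥ c = M *ᵥ (M.transpose *ᵥ c) := by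
    intro c; rw [← Matrix.mulVec_mulVec]
  have dot : ∀ c : Fin ℓ → ℝ, c ⬝ᵥ ((M * M.transpose) *ᵥ c) =
      ∑ i, (M.transpose *ᵥ c) i ^ 2 := by
    intro c
    rw [key, Matrix.dotProduct_mulVec, ← Matrix.mulVec_transpose]
    simp [dotProduct, sq]
  ext x
  constructor
  · rintro ⟨c, hc, rfl⟩
    refine ⟨M.transpose *ᵥ c, by rw [← dot c]; exact hc, ?_⟩
    simp_rw [key]
  · rintro ⟨u, hu, rfl⟩
    refine ⟨(M.transpose)⁻¹ *ᵥ u, ?_, ?_⟩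
    · rw [dot, hinv]; exact hu
    · rw [key, hinv]

end AuxReal

section AuxGram

variable {V₂ : Type*} [AddCommGroup V₂] [Module ℝ V₂]

lemma aux_gv_apply {ι : Type*} [Fintype ι]
    [DecidableEq ι] (t : Module.Basis ι ℝ V₂) (gv : V₂ →ₗ[ℝ] V₂ →ₗ[ℝ] ℝ) (S T : V₂) :
    gv S T = (t.equivFun S) ⬝ᵥ ((Matrix.of fun i j => gv (t i) (t j)) *ᵥ (t.equivFun T)) := by
  obtain ⟨c, rfl⟩ : ∃ c, t.equivFun.symm c = S := ⟨t.equivFun S, t.equivFun.symm_apply_apply S⟩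
  obtain ⟨d, rfl⟩ : ∃ d, t.equivFun.symm d = T := ⟨t.equivFun T, t.equivFun.symm_apply_apply T⟩
  rw [t.equivFun.apply_symm_apply, t.equivFun.apply_symm_apply,
    Module.Basis.equivFun_symm_apply, Module.Basis.equivFun_symm_apply]
  simp only [map_sum, map_smul, LinearMap.sum_apply, LinearMap.smul_apply, smul_eq_mul,
    dotProduct, Matrix.mulVec, Matrix.of_apply, Finset.mul_sum]
  rw [Finset.sum_comm]
  exact Finset.sum_congr rfl fun i _ => Finset.sum_congr rfl fun j _ => by ring

lemma aux_gv_basis_apply {ι : Type*} [Fintype ι]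
    [DecidableEq ι] (t : Module.Basis ι ℝ V₂) (gv : V₂ →ₗ[ℝ] V₂ →ₗ[ℝ] ℝ) (i : ι) (T : V₂) :
    gv (t i) T = ((Matrix.of fun i j => gv (t i) (t j)) *ᵥ (t.equivFun T)) i := by
  rw [aux_gv_apply t gv (t i) T,
    show t.equivFun (t i) = Pi.single i 1 by
      ext j; simp [Module.Basis.equivFun_apply, Module.Basis.repr_self_apply, Pi.single_apply, eq_comm],
    single_dotProduct]
  simp

lemma aux_gram_posdef {ℓ : ℕ} (t : Module.Basis (Fin ℓ) ℝ V₂) (gv : V₂ →ₗ[ℝ] V₂ →ₗ[ℝ] ℝ)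
    (hgv : IsVerticalMetric gv) :
    (Matrix.of fun i j => gv (t i) (t j)).PosDef := by
  rw [Matrix.posDef_iff_dotProduct_mulVec]
  constructor
  · ext i j
    simp only [Matrix.conjTranspose_apply, Matrix.of_apply, star_trivial]
    exact hgv.1 _ _
  · intro x hx
    have hT : t.equivFun.symm x ≠ 0 := fun h =>
      hx (by simpa using t.equivFun.symm.map_eq_zero_iff.mp h)
    have := hgv.2 _ hT
    rwa [aux_gv_apply t gv _ _, t.equivFun.apply_symm_apply] at this

lemma aux_metric_of_unit {ℓ : ℕ} (t : Module.Basis (Fin ℓ) ℝ V₂) (M : Matrix (Fin ℓ) (Fin ℓ) ℝ)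
    (hM : IsUnit M) :
    IsVerticalMetric (Matrix.toLinearMap₂ t t (M * M.transpose)) ∧
      (∀ i j, (Matrix.toLinearMap₂ t t (M * M.transpose)) (t i) (t j)
        = (M * M.transpose) i j) := by
  have hGram : ∀ i j, (Matrix.toLinearMap₂ t t (M * M.transpose)) (t i) (t j)
      = (M * M.transpose) i j := by
    intro i j
    rw [Matrix.toLinearMap₂_apply]
    simp [Module.Basis.repr_self, Finsupp.single_apply, Finset.sum_ite_eq, Finset.sum_ite_eq']
  have hsymm : (M * M.transpose).transpose = M * M.transpose := by
    rw [Matrix.transpose_mul, Matrix.transpose_transpose]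
  refine ⟨⟨?_, ?_⟩, hGram⟩
  · intro S T
    rw [aux_gv_apply t _ S T, aux_gv_apply t _ T S]
    have hG : (Matrix.of fun i j => (Matrix.toLinearMap₂ t t (M * M.transpose)) (t i) (t j))
        = M * M.transpose := by ext i j; simp [hGram]
    rw [hG, Matrix.dotProduct_mulVec, ← Matrix.mulVec_transpose, hsymm, dotProduct_comm]
  · intro T hT
    rw [aux_gv_apply t _ T T]
    have hG : (Matrix.of fun i j => (Matrix.toLinearMap₂ t t (M * M.transpose)) (t i) (t j))
        = M * M.transpose := by ext i j; simp [hGram]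
    rw [hG]
    have hc : t.equivFun T ≠ 0 := fun h => hT (by
      have := congrArg t.equivFun.symm h
      simp only [t.equivFun.symm_apply_apply, map_zero] at this
      exact this)
    set c := t.equivFun T
    have hdetT : IsUnit M.transpose.det := by
      rw [Matrix.det_transpose]; exact (Matrix.isUnit_iff_isUnit_det M).mp hM
    have hu : M.transpose *ᵥ c ≠ 0 := by
      intro h
      have := congrArg ((M.transpose)⁻¹ *ᵥ ·) h
      simp only [Matrix.mulVec_mulVec] at this
      rw [Matrix.nonsing_inv_mul _ hdetT, Matrix.one_mulVec, Matrix.mulVec_zero] at this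
      exact hc this
    have hdot : c ⬝ᵥ ((M * M.transpose) *ᵥ c) = ∑ i, (M.transpose *ᵥ c) i ^ 2 := by
      rw [← Matrix.mulVec_mulVec, Matrix.dotProduct_mulVec, ← Matrix.mulVec_transpose]
      simp [dotProduct, sq]
    rw [hdot]
    obtain ⟨i, hi⟩ : ∃ i, (M.transpose *ᵥ c) i ≠ 0 := by
      by_contra h; push_neg at h; exact hu (funext h)
    exact Finset.sum_pos' (fun j _ => sq_nonneg _) ⟨i, Finset.mem_univ i, by positivity⟩

end AuxGram

section AuxTrace

lemma aux_trace {V : Type*} [NormedAddCommGroup V] [InnerProductSpace ℝ V]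
    [FiniteDimensional ℝ V] {ι : Type*} [Fintype ι] [DecidableEq ι]
    (b : OrthonormalBasis ι ℝ V) (A : V →ₗ[ℝ] V) :
    LinearMap.trace ℝ V (LinearMap.adjoint A ∘ₗ A) = ∑ e, ⟪A (b e), A (b e)⟫ := by
  rw [LinearMap.trace_eq_matrix_trace ℝ b.toBasis, Matrix.trace]
  congr 1
  ext e
  rw [Matrix.diag_apply, LinearMap.toMatrix_apply, b.coe_toBasis, b.coe_toBasis_repr_apply,
    b.repr_apply_apply, LinearMap.comp_apply, LinearMap.adjoint_inner_right]

lemma aux_hsNorm_diag {V : Type*} [NormedAddCommGroup V] [InnerProductSpace ℝ V]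
    [FiniteDimensional ℝ V] {ι : Type*} [Fintype ι] [DecidableEq ι]
    (b : OrthonormalBasis ι ℝ V) (A : V →ₗ[ℝ] V) (μ : ι → ℝ)
    (h : ∀ e, A (b e) = μ e • b e) :
    hsNorm A = Real.sqrt (∑ e, μ e ^ 2) := by
  rw [hsNorm, aux_trace b A]
  congr 1
  refine Finset.sum_congr rfl fun e _ => ?_
  rw [h e, real_inner_smul_left, real_inner_smul_right, real_inner_self_eq_norm_sq,
    b.orthonormal.1 e]
  ring

end AuxTrace

lemma aux_kaplan {V₁ V₂ : Type*} [NormedAddCommGroup V₁]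
    [InnerProductSpace ℝ V₁] [FiniteDimensional ℝ V₁]
    [AddCommGroup V₂] [Module ℝ V₂]
    (ℓ : ℕ) (k : Fin ℓ → ℕ)
    (β : V₁ →ₗ[ℝ] V₁ →ₗ[ℝ] V₂)
    (halt : ∀ X : V₁, β X X = 0)
    (b : OrthonormalBasis ((Σ i : Fin ℓ, Fin (k i)) ⊕ (Σ i : Fin ℓ, Fin (k i))) ℝ V₁)
    (t : Module.Basis (Fin ℓ) ℝ V₂)
    (hXY : ∀ s : Σ i : Fin ℓ, Fin (k i), β (b (Sum.inl s)) (b (Sum.inr s)) = t s.1)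
    (hXY' : ∀ s s' : Σ i : Fin ℓ, Fin (k i), s ≠ s' →
      β (b (Sum.inl s)) (b (Sum.inr s')) = 0)
    (hXX : ∀ s s' : Σ i : Fin ℓ, Fin (k i), β (b (Sum.inl s)) (b (Sum.inl s')) = 0)
    (hYY : ∀ s s' : Σ i : Fin ℓ, Fin (k i), β (b (Sum.inr s)) (b (Sum.inr s')) = 0)
    (gv : V₂ →ₗ[ℝ] V₂ →ₗ[ℝ] ℝ) (T : V₂) :
    ∃ J : V₁ →ₗ[ℝ] V₁, IsKaplan β gv T J ∧
      (∀ J' : V₁ →ₗ[ℝ] V₁, IsKaplan β gv T J' → J' = J) ∧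
      hsNorm (J ∘ₗ J + LinearMap.id) =
        Real.sqrt (2 * ∑ i, (k i : ℝ) * (1 - (gv (t i) T) ^ 2) ^ 2) := by
  classical
  set lam : Fin ℓ → ℝ := fun i => gv (t i) T with hlam
  set J₀ : V₁ →ₗ[ℝ] V₁ := b.toBasis.constr ℝ
    (Sum.elim (fun s => lam s.1 • b (Sum.inr s)) (fun s => -(lam s.1 • b (Sum.inl s)))) with hJ₀
  have hJ : ∀ e, J₀ (b e) = Sum.elim (fun s => lam s.1 • b (Sum.inr s))
      (fun s => -(lam s.1 • b (Sum.inl s))) e := by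
    intro e
    rw [hJ₀, ← b.coe_toBasis, Module.Basis.constr_basis]
  have hanti : ∀ X Y : V₁, β Y X = -β X Y := by
    intro X Y
    have h := halt (X + Y)
    simp only [map_add, LinearMap.add_apply, halt, zero_add, add_zero] at h
    exact eq_neg_of_add_eq_zero_left h
  have hite := orthonormal_iff_ite.mp b.orthonormal
  have hcase : ∀ e f, ⟪J₀ (b e), b f⟫ = gv (β (b e) (b f)) T := by
    rintro (s | s) (s' | s') <;> rw [hJ]
    · simp only [Sum.elim_inl, inner_smul_left, RCLike.conj_to_real, hite, hXX,
        map_zero, LinearMap.zero_apply]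
      rw [if_neg (by simp)]
      ring
    · simp only [Sum.elim_inl, inner_smul_left, RCLike.conj_to_real, hite]
      by_cases h : s = s'
      · subst h
        rw [if_pos rfl, hXY, mul_one]
      · rw [if_neg (by simpa using h), hXY' s s' h, map_zero, LinearMap.zero_apply, mul_zero]
    · simp only [Sum.elim_inr, inner_neg_left, inner_smul_left, RCLike.conj_to_real, hite]
      rw [hanti]
      by_cases h : s' = s
      · subst h
        rw [if_pos rfl, hXY, map_neg, LinearMap.neg_apply, mul_one]
      · rw [if_neg (by simpa using fun hh => h hh.symm), hXY' s' s h, neg_zero, map_zero,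
          LinearMap.zero_apply, mul_zero, neg_zero]
    · simp only [Sum.elim_inr, inner_neg_left, inner_smul_left, RCLike.conj_to_real, hite, hYY,
        map_zero, LinearMap.zero_apply]
      rw [if_neg (by simp)]
      ring
  have hKap : IsKaplan β gv T J₀ := by
    intro U W
    rw [← b.toBasis.sum_repr U, ← b.toBasis.sum_repr W]
    simp only [map_sum, map_smul, LinearMap.sum_apply, LinearMap.smul_apply, sum_inner,
      inner_sum, real_inner_smul_left, real_inner_smul_right, smul_eq_mul, b.coe_toBasis,
      Finset.mul_sum]
    refine Finset.sum_congr rfl fun e _ => Finset.sum_congr rfl fun f _ => ?_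
    rw [hcase]
  refine ⟨J₀, hKap, ?_, ?_⟩
  · intro J' hJ'
    ext U
    refine ext_inner_right ℝ fun W => ?_
    rw [hJ' U W, hKap U W]
  · have hdiag : ∀ e, (J₀ ∘ₗ J₀ + (LinearMap.id : V₁ →ₗ[ℝ] V₁)) (b e) =
        (Sum.elim (fun s : Σ i : Fin ℓ, Fin (k i) => 1 - lam s.1 ^ 2)
          (fun s => 1 - lam s.1 ^ 2)) e • b e := by
      rintro (s | s) <;>
        simp only [LinearMap.add_apply, LinearMap.comp_apply, LinearMap.id_apply, hJ,
          Sum.elim_inl, Sum.elim_inr, map_smul, map_neg, smul_neg, neg_neg, smul_smul,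
          sub_smul, one_smul, ← pow_two] <;>
        abel
    rw [aux_hsNorm_diag b _ _ hdiag]
    congr 1
    rw [Fintype.sum_sum_type]
    simp only [Sum.elim_inl, Sum.elim_inr]
    have hσ : ∀ c : Fin ℓ → ℝ, ∑ s : Σ i : Fin ℓ, Fin (k i), c s.1 = ∑ i, (k i : ℝ) * c i := by
      intro c
      rw [← Finset.univ_sigma_univ, Finset.sum_sigma]
      refine Finset.sum_congr rfl fun i _ => ?_
      simp [Finset.sum_const, Finset.card_univ, mul_comm]
    rw [hσ (fun i => (1 - lam i ^ 2) ^ 2)]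
    ring

lemma aux_devOf {V₁ V₂ : Type*} [NormedAddCommGroup V₁]
    [InnerProductSpace ℝ V₁] [FiniteDimensional ℝ V₁]
    [AddCommGroup V₂] [Module ℝ V₂] [FiniteDimensional ℝ V₂]
    (ℓ : ℕ) (hℓ : 0 < ℓ) (k : Fin ℓ → ℕ) (hk : ∀ i, 0 < k i)
    (n : ℕ) (hn : n = ∑ i, k i)
    (β : V₁ →ₗ[ℝ] V₁ →ₗ[ℝ] V₂)
    (halt : ∀ X : V₁, β X X = 0)
    (b : OrthonormalBasis ((Σ i : Fin ℓ, Fin (k i)) ⊕ (Σ i : Fin ℓ, Fin (k i))) ℝ V₁)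
    (t : Module.Basis (Fin ℓ) ℝ V₂)
    (hXY : ∀ s : Σ i : Fin ℓ, Fin (k i), β (b (Sum.inl s)) (b (Sum.inr s)) = t s.1)
    (hXY' : ∀ s s' : Σ i : Fin ℓ, Fin (k i), s ≠ s' →
      β (b (Sum.inl s)) (b (Sum.inr s')) = 0)
    (hXX : ∀ s s' : Σ i : Fin ℓ, Fin (k i), β (b (Sum.inl s)) (b (Sum.inl s')) = 0)
    (hYY : ∀ s s' : Σ i : Fin ℓ, Fin (k i), β (b (Sum.inr s)) (b (Sum.inr s')) = 0)
    (gv : V₂ →ₗ[ℝ] V₂ →ₗ[ℝ] ℝ) (hgv : IsVerticalMetric gv)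
    (M : Matrix (Fin ℓ) (Fin ℓ) ℝ) (hM : IsUnit M)
    (hGram : (Matrix.of fun i j => gv (t i) (t j)) = M * M.transpose) :
    deviationOf β gv = Real.sqrt (sSup {x : ℝ | ∃ u : Fin ℓ → ℝ, ∑ i, u i ^ 2 = 1 ∧
      x = ∑ i, ((k i : ℝ) / n) * (1 - (M.mulVec u i) ^ 2) ^ 2}) := by
  classical
  have hn0 : 0 < n := by
    rw [hn]
    have : Nonempty (Fin ℓ) := ⟨⟨0, hℓ⟩⟩
    exact Finset.sum_pos (fun i _ => hk i) Finset.univ_nonempty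
  have hnR : (0:ℝ) < (n:ℝ) := by exact_mod_cast hn0
  have hrank : (Module.finrank ℝ V₁ : ℝ) = 2 * n := by
    rw [Module.finrank_eq_card_basis b.toBasis, Fintype.card_sum, Fintype.card_sigma]
    simp only [Fintype.card_fin]
    rw [← hn]
    push_cast
    ring
  have h2n : (0:ℝ) < 2 * n := by linarith
  -- value computation for a fixed T
  have hval : ∀ T : V₂, Real.sqrt (2 * ∑ i, (k i : ℝ) * (1 - (gv (t i) T) ^ 2) ^ 2) =
      Real.sqrt (2 * n) * Real.sqrt (∑ i, ((k i : ℝ) / n) *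
        (1 - (((M * M.transpose) *ᵥ (t.equivFun T)) i) ^ 2) ^ 2) := by
    intro T
    rw [← Real.sqrt_mul (le_of_lt h2n)]
    congr 1
    have hlam : ∀ i, gv (t i) T = ((M * M.transpose) *ᵥ (t.equivFun T)) i := fun i => by
      rw [aux_gv_basis_apply t gv i T, hGram]
    simp_rw [hlam]
    rw [Finset.mul_sum, Finset.mul_sum]
    refine Finset.sum_congr rfl fun i _ => ?_
    have hne : (n:ℝ) ≠ 0 := ne_of_gt hnR
    field_simp
  -- the set appearing in `deviationOf`
  have hset : {x : ℝ | ∃ T : V₂, ∃ J : V₁ →ₗ[ℝ] V₁,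
      gv T T = 1 ∧ IsKaplan β gv T J ∧ x = hsNorm (J ∘ₗ J + LinearMap.id)} =
      (fun w => Real.sqrt (2 * n) * Real.sqrt w) ''
        {x : ℝ | ∃ c : Fin ℓ → ℝ, c ⬝ᵥ ((M * M.transpose) *ᵥ c) = 1 ∧
          x = ∑ i, ((k i : ℝ) / n) * (1 - (((M * M.transpose) *ᵥ c) i) ^ 2) ^ 2} := by
    ext x
    constructor
    · rintro ⟨T, J, hT1, hKJ, rfl⟩
      obtain ⟨J₀, hK0, huniq, hnorm⟩ := aux_kaplan ℓ k β halt b t hXY hXY' hXX hYY gv T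
      rw [huniq J hKJ, hnorm, hval T]
      refine ⟨_, ⟨t.equivFun T, ?_, rfl⟩, rfl⟩
      rw [← hGram]
      rw [aux_gv_apply t gv T T] at hT1
      exact hT1
    · rintro ⟨w, ⟨c, hc, rfl⟩, rfl⟩
      set T := t.equivFun.symm c with hT
      obtain ⟨J₀, hK0, huniq, hnorm⟩ := aux_kaplan ℓ k β halt b t hXY hXY' hXX hYY gv T
      refine ⟨T, J₀, ?_, hK0, ?_⟩
      · rw [aux_gv_apply t gv T T, hGram, hT, t.equivFun.apply_symm_apply]
        exact hc
      · rw [hnorm, hval T, hT, t.equivFun.apply_symm_apply]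
  have hWU := aux_W_eq_U ℓ k n M hM
  obtain ⟨hUne, hUbdd, hUnn⟩ := aux_U_props ℓ hℓ k n M
  have hWne : ({x : ℝ | ∃ c : Fin ℓ → ℝ, c ⬝ᵥ ((M * M.transpose) *ᵥ c) = 1 ∧
      x = ∑ i, ((k i : ℝ) / n) * (1 - (((M * M.transpose) *ᵥ c) i) ^ 2) ^ 2}).Nonempty := by
    rw [hWU]; exact hUne
  have hWbdd : BddAbove {x : ℝ | ∃ c : Fin ℓ → ℝ, c ⬝ᵥ ((M * M.transpose) *ᵥ c) = 1 ∧
      x = ∑ i, ((k i : ℝ) / n) * (1 - (((M * M.transpose) *ᵥ c) i) ^ 2) ^ 2} := by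
    rw [hWU]; exact hUbdd
  rw [deviationOf, hset, aux_csSup_image (Real.sqrt_nonneg _) hWne hWbdd, hWU, hrank]
  rw [inv_mul_cancel_left₀ (by positivity)]

/-- The square of the H-type deviation of a product of Heisenberg groups equals the
min-max value `inf_M sup_u Σ_i (k_i/n)(1 - (Mu)_i²)²` over invertible matrices `M`
and Euclidean unit vectors `u`. -/
theorem h_type_deviation_product_heisenberg_minmax {V₁ V₂ : Type*} [NormedAddCommGroup V₁]
    [InnerProductSpace ℝ V₁] [FiniteDimensional ℝ V₁]
    [AddCommGroup V₂] [Module ℝ V₂] [FiniteDimensional ℝ V₂]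
    (ℓ : ℕ) (hℓ : 0 < ℓ) (k : Fin ℓ → ℕ) (hk : ∀ i, 0 < k i) (hmono : Monotone k)
    (n : ℕ) (hn : n = ∑ i, k i)
    (β : V₁ →ₗ[ℝ] V₁ →ₗ[ℝ] V₂)
    (halt : ∀ X : V₁, β X X = 0)
    (b : OrthonormalBasis ((Σ i : Fin ℓ, Fin (k i)) ⊕ (Σ i : Fin ℓ, Fin (k i))) ℝ V₁)
    (t : Module.Basis (Fin ℓ) ℝ V₂)
    (hXY : ∀ s : Σ i : Fin ℓ, Fin (k i), β (b (Sum.inl s)) (b (Sum.inr s)) = t s.1)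
    (hXY' : ∀ s s' : Σ i : Fin ℓ, Fin (k i), s ≠ s' →
      β (b (Sum.inl s)) (b (Sum.inr s')) = 0)
    (hXX : ∀ s s' : Σ i : Fin ℓ, Fin (k i), β (b (Sum.inl s)) (b (Sum.inl s')) = 0)
    (hYY : ∀ s s' : Σ i : Fin ℓ, Fin (k i), β (b (Sum.inr s)) (b (Sum.inr s')) = 0) :
    (deviation β) ^ 2 =
      sInf {d : ℝ | ∃ M : Matrix (Fin ℓ) (Fin ℓ) ℝ, IsUnit M ∧
        d = sSup {x : ℝ | ∃ u : Fin ℓ → ℝ, ∑ i, u i ^ 2 = 1 ∧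
          x = ∑ i, ((k i : ℝ) / n) * (1 - (M.mulVec u i) ^ 2) ^ 2}} := by
  classical
  -- factorization of the Gram matrix of a vertical metric
  have hfact : ∀ gv : V₂ →ₗ[ℝ] V₂ →ₗ[ℝ] ℝ, IsVerticalMetric gv →
      ∃ M : Matrix (Fin ℓ) (Fin ℓ) ℝ, IsUnit M ∧
        (Matrix.of fun i j => gv (t i) (t j)) = M * M.transpose := by
    intro gv hgv
    have hG := aux_gram_posdef t gv hgv
    open MatrixOrder in
    set M := CFC.sqrt (Matrix.of fun i j => gv (t i) (t j)) with hMdef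
    open MatrixOrder in
    have hMM : M * M = Matrix.of fun i j => gv (t i) (t j) :=
      CFC.sqrt_mul_sqrt_self _ (Matrix.nonneg_iff_posSemidef.mpr hG.posSemidef)
    have hMT : M.transpose = M := by
      open MatrixOrder in
      have h := (Matrix.nonneg_iff_posSemidef.mp (CFC.sqrt_nonneg
        (Matrix.of fun i j => gv (t i) (t j)))).1
      have h2 : M.conjTranspose = M.transpose := by
        ext i j; simp [Matrix.conjTranspose_apply]
      rw [← h2]
      exact h
    have hdet : M.det ≠ 0 := by
      intro h0
      have hGdet : (Matrix.of fun i j => gv (t i) (t j)).det = 0 := by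
        rw [← hMM, Matrix.det_mul, h0, mul_zero]
      exact (ne_of_gt hG.det_pos) hGdet
    exact ⟨M, (Matrix.isUnit_iff_isUnit_det M).mpr (isUnit_iff_ne_zero.mpr hdet),
      by rw [hMT, hMM]⟩
  -- the deviation set is the square-root image of the min-max set
  have hD : {d : ℝ | ∃ gv : V₂ →ₗ[ℝ] V₂ →ₗ[ℝ] ℝ, IsVerticalMetric gv ∧ d = deviationOf β gv} =
      Real.sqrt '' {d : ℝ | ∃ M : Matrix (Fin ℓ) (Fin ℓ) ℝ, IsUnit M ∧
        d = sSup {x : ℝ | ∃ u : Fin ℓ → ℝ, ∑ i, u i ^ 2 = 1 ∧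
          x = ∑ i, ((k i : ℝ) / n) * (1 - (M.mulVec u i) ^ 2) ^ 2}} := by
    ext d
    constructor
    · rintro ⟨gv, hgv, rfl⟩
      obtain ⟨M, hM, hGram⟩ := hfact gv hgv
      exact ⟨_, ⟨M, hM, rfl⟩,
        (aux_devOf ℓ hℓ k hk n hn β halt b t hXY hXY' hXX hYY gv hgv M hM hGram).symm⟩
    · rintro ⟨w, ⟨M, hM, rfl⟩, rfl⟩
      obtain ⟨hgv, hGram'⟩ := aux_metric_of_unit t M hM
      refine ⟨Matrix.toLinearMap₂ t t (M * M.transpose), hgv, ?_⟩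
      refine (aux_devOf ℓ hℓ k hk n hn β halt b t hXY hXY' hXX hYY _ hgv M hM ?_).symm
      ext i j
      simp only [Matrix.of_apply]
      exact hGram' i j
  -- the min-max set is nonempty and bounded below by 0
  have hEne : ({d : ℝ | ∃ M : Matrix (Fin ℓ) (Fin ℓ) ℝ, IsUnit M ∧
      d = sSup {x : ℝ | ∃ u : Fin ℓ → ℝ, ∑ i, u i ^ 2 = 1 ∧
        x = ∑ i, ((k i : ℝ) / n) * (1 - (M.mulVec u i) ^ 2) ^ 2}}).Nonempty :=
    ⟨_, ⟨1, isUnit_one, rfl⟩⟩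
  have hEnn : ∀ d ∈ {d : ℝ | ∃ M : Matrix (Fin ℓ) (Fin ℓ) ℝ, IsUnit M ∧
      d = sSup {x : ℝ | ∃ u : Fin ℓ → ℝ, ∑ i, u i ^ 2 = 1 ∧
        x = ∑ i, ((k i : ℝ) / n) * (1 - (M.mulVec u i) ^ 2) ^ 2}}, 0 ≤ d := by
    rintro d ⟨M, hM, rfl⟩
    obtain ⟨⟨x0, hx0⟩, hbdd, hnn⟩ := aux_U_props ℓ hℓ k n M
    exact le_trans (hnn x0 hx0) (le_csSup hbdd hx0)
  rw [deviation, hD, aux_csInf_image hEne ⟨0, fun d hd => hEnn d hd⟩,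
    Real.sq_sqrt (le_csInf hEne hEnn)]
end

section
/- Let k₁ ≤ k₂ ≤ ⋯ ≤ k_ℓ be positive integers with n = k₁+⋯+k_ℓ. Then the infimum over invertible real ℓ×ℓ matrices M of the supremum over u ∈ ℝ^ℓ with ‖u‖₂ = 1 of Σ_{i=1}^ℓ (k_i/n)·(1 − (Mu)_i²)² equals 1 − k₁/n. -/
/-- The min-max value `inf_M sup_u Σ_i (k_i/n)(1 - (Mu)_i²)²`, over invertible real
`ℓ×ℓ` matrices `M` and Euclidean unit vectors `u`, equals `1 - k₁/n`. -/
theorem minmax_value_product_heisenberg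
    (ℓ : ℕ) (hℓ : 0 < ℓ) (k : Fin ℓ → ℕ) (hk : ∀ i, 0 < k i) (hmono : Monotone k)
    (n : ℕ) (hn : n = ∑ i, k i) :
    sInf {d : ℝ | ∃ M : Matrix (Fin ℓ) (Fin ℓ) ℝ, IsUnit M ∧
        d = sSup {x : ℝ | ∃ u : Fin ℓ → ℝ, ∑ i, u i ^ 2 = 1 ∧
          x = ∑ i, ((k i : ℝ) / n) * (1 - (M.mulVec u i) ^ 2) ^ 2}}
      = 1 - (k ⟨0, hℓ⟩ : ℝ) / n := by
  set i0 : Fin ℓ := ⟨0, hℓ⟩ with hi0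
  have hn0 : 0 < n := by
    rw [hn]; exact Finset.sum_pos (fun i _ => hk i) ⟨i0, Finset.mem_univ _⟩
  have hnR : (0:ℝ) < n := by exact_mod_cast hn0
  set w : Fin ℓ → ℝ := fun i => (k i : ℝ) / n with hwdef
  have hwnn : ∀ i, 0 ≤ w i := fun i => by positivity
  have hwsum : ∑ i, w i = 1 := by
    rw [hwdef]
    simp only
    rw [← Finset.sum_div, div_eq_one_iff_eq hnR.ne']
    exact_mod_cast hn.symm
  have hw0le : ∀ i, w i0 ≤ w i := by
    intro i
    have h : k i0 ≤ k i := hmono (by simp [hi0, Fin.le_def])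
    exact div_le_div_of_nonneg_right (by exact_mod_cast h) hnR.le
  have hw0one : w i0 ≤ 1 := by
    rw [← hwsum]
    exact Finset.single_le_sum (fun i _ => hwnn i) (Finset.mem_univ i0)
  -- bounded above of each inner set
  have hbdd : ∀ M : Matrix (Fin ℓ) (Fin ℓ) ℝ,
      BddAbove {x : ℝ | ∃ u : Fin ℓ → ℝ, ∑ i, u i ^ 2 = 1 ∧
        x = ∑ i, w i * (1 - (M.mulVec u i) ^ 2) ^ 2} := by
    intro M
    have hfc : Continuous fun u : Fin ℓ → ℝ =>
        ∑ i, w i * (1 - (M.mulVec u i) ^ 2) ^ 2 := by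
      apply continuous_finset_sum
      intro i _
      apply continuous_const.mul
      apply Continuous.pow
      apply continuous_const.sub
      apply Continuous.pow
      simp only [Matrix.mulVec, dotProduct]
      exact continuous_finset_sum _ fun j _ => continuous_const.mul (continuous_apply j)
    have hgc : Continuous fun u : Fin ℓ → ℝ => ∑ i, u i ^ 2 :=
      continuous_finset_sum _ fun i _ => (continuous_apply i).pow 2
    have hK : IsCompact {u : Fin ℓ → ℝ | ∑ i, u i ^ 2 = 1} := by
      apply Metric.isCompact_of_isClosed_isBounded
      · exact isClosed_eq hgc continuous_const
      · apply Bornology.IsBounded.subset (Metric.isBounded_closedBall (x := (0 : Fin ℓ → ℝ)) (r := 1))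
        intro u hu
        simp only [Set.mem_setOf_eq] at hu
        simp only [Metric.mem_closedBall, dist_zero_right]
        rw [pi_norm_le_iff_of_nonneg zero_le_one]
        intro i
        have h1 : u i ^ 2 ≤ 1 := by
          rw [← hu]
          exact Finset.single_le_sum (fun j _ => sq_nonneg (u j)) (Finset.mem_univ i)
        rw [Real.norm_eq_abs, abs_le]
        constructor <;> nlinarith
    have := (hK.image hfc).bddAbove
    refine this.mono ?_
    rintro x ⟨u, hu, rfl⟩
    exact ⟨u, hu, rfl⟩
  -- lower bound: every element of the outer set is ≥ 1 - w i0
  have hlow : ∀ d ∈ {d : ℝ | ∃ M : Matrix (Fin ℓ) (Fin ℓ) ℝ, IsUnit M ∧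
      d = sSup {x : ℝ | ∃ u : Fin ℓ → ℝ, ∑ i, u i ^ 2 = 1 ∧
        x = ∑ i, w i * (1 - (M.mulVec u i) ^ 2) ^ 2}}, 1 - w i0 ≤ d := by
    rintro d ⟨M, hM, rfl⟩
    -- find v ≠ 0 killed by all rows except row i0
    set M' : Matrix (Fin ℓ) (Fin ℓ) ℝ := M.updateRow i0 0 with hM'
    have hdet : M'.det = 0 :=
      Matrix.det_eq_zero_of_row_eq_zero i0 (by simp [hM'])
    obtain ⟨v, hv0, hvk⟩ := (Matrix.exists_mulVec_eq_zero_iff).2 hdet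
    have hvrow : ∀ i, i ≠ i0 → M.mulVec v i = 0 := by
      intro i hi
      have : M'.mulVec v i = 0 := by rw [hvk]; rfl
      rwa [hM', Matrix.mulVec, Matrix.updateRow_ne hi] at this
    set s : ℝ := ∑ j, v j ^ 2 with hs
    have hspos : 0 < s := by
      obtain ⟨j, hj⟩ := Function.ne_iff.1 hv0
      exact Finset.sum_pos' (fun i _ => sq_nonneg _)
        ⟨j, Finset.mem_univ j, lt_of_le_of_ne (sq_nonneg _) (Ne.symm (pow_ne_zero 2 hj))⟩
    set u : Fin ℓ → ℝ := (Real.sqrt s)⁻¹ • v with hu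
    have hsqrt : (0:ℝ) < Real.sqrt s := Real.sqrt_pos.2 hspos
    have hunit : ∑ i, u i ^ 2 = 1 := by
      simp only [hu, Pi.smul_apply, smul_eq_mul, mul_pow]
      rw [← Finset.mul_sum, ← hs, inv_pow, Real.sq_sqrt hspos.le]
      exact inv_mul_cancel₀ hspos.ne'
    have humul : ∀ i, i ≠ i0 → M.mulVec u i = 0 := by
      intro i hi
      rw [hu, Matrix.mulVec_smul]
      simp [hvrow i hi]
    have hval : (1 - w i0) ≤ ∑ i, w i * (1 - (M.mulVec u i) ^ 2) ^ 2 := by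
      have hsplit : ∑ i, w i * (1 - (M.mulVec u i) ^ 2) ^ 2
          = (∑ i ∈ Finset.univ \ {i0}, w i * (1 - (M.mulVec u i) ^ 2) ^ 2)
            + w i0 * (1 - (M.mulVec u i0) ^ 2) ^ 2 :=
        (Finset.sum_eq_sum_sdiff_singleton_add (Finset.mem_univ i0) _)
      have h2 : ∑ i ∈ Finset.univ \ {i0}, w i * (1 - (M.mulVec u i) ^ 2) ^ 2
          = ∑ i ∈ Finset.univ \ {i0}, w i := by
        apply Finset.sum_congr rfl
        intro i hi
        have hi' : i ≠ i0 := by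
          simp only [Finset.mem_sdiff, Finset.mem_singleton] at hi
          exact hi.2
        rw [humul i hi']
        ring
      have h3 : ∑ i ∈ Finset.univ \ {i0}, w i = 1 - w i0 := by
        have := (Finset.sum_eq_sum_sdiff_singleton_add (Finset.mem_univ i0) w)
        rw [hwsum] at this
        linarith
      rw [hsplit, h2, h3]
      nlinarith [mul_nonneg (hwnn i0) (sq_nonneg (1 - (M.mulVec u i0) ^ 2))]
    exact le_trans hval (le_csSup (hbdd M) ⟨u, hunit, rfl⟩)
  -- identity matrix element
  have hidmem : sSup {x : ℝ | ∃ u : Fin ℓ → ℝ, ∑ i, u i ^ 2 = 1 ∧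
      x = ∑ i, w i * (1 - ((1 : Matrix (Fin ℓ) (Fin ℓ) ℝ).mulVec u i) ^ 2) ^ 2}
      ∈ {d : ℝ | ∃ M : Matrix (Fin ℓ) (Fin ℓ) ℝ, IsUnit M ∧
        d = sSup {x : ℝ | ∃ u : Fin ℓ → ℝ, ∑ i, u i ^ 2 = 1 ∧
          x = ∑ i, w i * (1 - (M.mulVec u i) ^ 2) ^ 2}} :=
    ⟨1, isUnit_one, rfl⟩
  have hidle : sSup {x : ℝ | ∃ u : Fin ℓ → ℝ, ∑ i, u i ^ 2 = 1 ∧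
      x = ∑ i, w i * (1 - ((1 : Matrix (Fin ℓ) (Fin ℓ) ℝ).mulVec u i) ^ 2) ^ 2}
      ≤ 1 - w i0 := by
    apply Real.sSup_le
    · rintro x ⟨u, hu, rfl⟩
      simp only [Matrix.one_mulVec]
      have hle1 : ∀ i, u i ^ 2 ≤ 1 := by
        intro i
        rw [← hu]
        exact Finset.single_le_sum (fun j _ => sq_nonneg (u j)) (Finset.mem_univ i)
      have step1 : ∑ i, w i * (1 - u i ^ 2) ^ 2 ≤ ∑ i, w i * (1 - u i ^ 2) := by
        apply Finset.sum_le_sum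
        intro i _
        have h0 : 0 ≤ 1 - u i ^ 2 := by linarith [hle1 i]
        have h1 : (1 - u i ^ 2) ^ 2 ≤ 1 - u i ^ 2 := by nlinarith [sq_nonneg (u i)]
        exact mul_le_mul_of_nonneg_left h1 (hwnn i)
      have step2 : ∑ i, w i * (1 - u i ^ 2) = 1 - ∑ i, w i * u i ^ 2 := by
        simp only [mul_sub, mul_one]
        rw [Finset.sum_sub_distrib, hwsum]
      have step3 : w i0 ≤ ∑ i, w i * u i ^ 2 := by
        calc w i0 = ∑ i, w i0 * u i ^ 2 := by rw [← Finset.mul_sum, hu, mul_one]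
          _ ≤ ∑ i, w i * u i ^ 2 :=
            Finset.sum_le_sum fun i _ => mul_le_mul_of_nonneg_right (hw0le i) (sq_nonneg _)
      linarith
    · linarith
  -- conclude
  have hgoal : sInf {d : ℝ | ∃ M : Matrix (Fin ℓ) (Fin ℓ) ℝ, IsUnit M ∧
      d = sSup {x : ℝ | ∃ u : Fin ℓ → ℝ, ∑ i, u i ^ 2 = 1 ∧
        x = ∑ i, w i * (1 - (M.mulVec u i) ^ 2) ^ 2}} = 1 - w i0 := by
    apply le_antisymm
    · exact le_trans (csInf_le ⟨1 - w i0, fun d hd => hlow d hd⟩ hidmem) hidle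
    · exact le_csInf ⟨_, hidmem⟩ hlow
  exact hgoal
end

section
/- Let k₁ ≤ k₂ ≤ ⋯ ≤ k_ℓ be positive integers with n = k₁+⋯+k_ℓ, and set F(M,u) = Σ_{i=1}^ℓ (k_i/n)·(1 − (Mu)_i²)². Then the infimum over all invertible real ℓ×ℓ matrices M of sup{ F(M,u) : u ∈ ℝ^ℓ, ‖u‖₂ = 1 } equals the infimum of the same quantity taken only over those invertible matrices M = (m_{i,j}) satisfying m_{i,1} = 0 for all 2 ≤ i ≤ ℓ. -/
open Matrix

private lemma sq_sum_mulVec_orth {ℓ : ℕ} (Q : Matrix (Fin ℓ) (Fin ℓ) ℝ)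
    (hQ : Qᵀ * Q = 1) (u : Fin ℓ → ℝ) :
    ∑ i, (Q.mulVec u i) ^ 2 = ∑ i, u i ^ 2 := by
  have h2 : (Q.mulVec u) ⬝ᵥ (Q.mulVec u) = u ⬝ᵥ u := by
    rw [Matrix.dotProduct_mulVec, ← Matrix.mulVec_transpose, Matrix.mulVec_mulVec, hQ,
      Matrix.one_mulVec]
  simpa [dotProduct, sq] using h2

private lemma sup_set_eq {ℓ : ℕ} (M Q : Matrix (Fin ℓ) (Fin ℓ) ℝ) (hQ : Qᵀ * Q = 1)
    (k : Fin ℓ → ℕ) (n : ℕ) :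
    {x : ℝ | ∃ u : Fin ℓ → ℝ, ∑ i, u i ^ 2 = 1 ∧
        x = ∑ i, ((k i : ℝ) / n) * (1 - ((M * Q).mulVec u i) ^ 2) ^ 2}
    = {x : ℝ | ∃ u : Fin ℓ → ℝ, ∑ i, u i ^ 2 = 1 ∧
        x = ∑ i, ((k i : ℝ) / n) * (1 - (M.mulVec u i) ^ 2) ^ 2} := by
  have hQ' : Q * Qᵀ = 1 := mul_eq_one_comm.mp hQ
  ext x
  constructor
  · rintro ⟨u, hu, rfl⟩
    exact ⟨Q.mulVec u, by rw [sq_sum_mulVec_orth Q hQ u, hu],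
      by simp [Matrix.mulVec_mulVec]⟩
  · rintro ⟨u, hu, rfl⟩
    refine ⟨Qᵀ.mulVec u, ?_, ?_⟩
    · have h : Qᵀᵀ * Qᵀ = 1 := by rwa [Matrix.transpose_transpose]
      rw [sq_sum_mulVec_orth Qᵀ h u, hu]
    · have : (M * Q).mulVec (Qᵀ.mulVec u) = M.mulVec u := by
        rw [Matrix.mulVec_mulVec, Matrix.mul_assoc, hQ', Matrix.mul_one]
      rw [this]

private lemma exists_orth_with_col {ℓ : ℕ} (z : Fin ℓ) (q : Fin ℓ → ℝ)
    (hq : ∑ i, q i ^ 2 = 1) :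
    ∃ Q : Matrix (Fin ℓ) (Fin ℓ) ℝ, Qᵀ * Q = 1 ∧ ∀ i, Q i z = q i := by
  let qE : EuclideanSpace ℝ (Fin ℓ) := WithLp.toLp 2 q
  have hnorm : ‖qE‖ = 1 := by
    rw [EuclideanSpace.norm_eq]
    have : ∑ i, ‖qE i‖ ^ 2 = 1 := by simpa [qE, sq_abs] using hq
    rw [this, Real.sqrt_one]
  have horth : Orthonormal ℝ (Set.restrict {z} (fun _ : Fin ℓ => qE)) := by
    refine ⟨fun i => hnorm, ?_⟩
    intro i j hij
    exact absurd (Subtype.ext (i.2.trans j.2.symm)) hij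
  have hcard : Module.finrank ℝ (EuclideanSpace ℝ (Fin ℓ)) = Fintype.card (Fin ℓ) := by
    simp
  obtain ⟨b, hb⟩ := horth.exists_orthonormalBasis_extension_of_card_eq hcard
  have hbz : b z = qE := hb z rfl
  refine ⟨Matrix.of fun i j => b j i, ?_, fun i => by simp [Matrix.of_apply, hbz, qE]⟩
  ext a c
  have := (orthonormal_iff_ite.mp b.orthonormal) a c
  rw [PiLp.inner_apply] at this
  simp only [RCLike.inner_apply, starRingEnd_apply, star_trivial] at this
  simp only [Matrix.mul_apply, Matrix.transpose_apply, Matrix.of_apply, Matrix.one_apply]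
  simpa [mul_comm] using this

/-- The infimum of `sup_u Σ_i (k_i/n)(1 - (Mu)_i²)²` over all invertible `M` equals the
infimum over invertible `M` whose first-column entries vanish below the diagonal,
i.e. `m_{i,1} = 0` for all `i ≥ 2`. -/
theorem minmax_restricted_first_column
    (ℓ : ℕ) (hℓ : 0 < ℓ) (k : Fin ℓ → ℕ) (hk : ∀ i, 0 < k i) (hmono : Monotone k)
    (n : ℕ) (hn : n = ∑ i, k i) :
    sInf {d : ℝ | ∃ M : Matrix (Fin ℓ) (Fin ℓ) ℝ, IsUnit M ∧
        d = sSup {x : ℝ | ∃ u : Fin ℓ → ℝ, ∑ i, u i ^ 2 = 1 ∧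
          x = ∑ i, ((k i : ℝ) / n) * (1 - (M.mulVec u i) ^ 2) ^ 2}}
    = sInf {d : ℝ | ∃ M : Matrix (Fin ℓ) (Fin ℓ) ℝ, IsUnit M ∧
        (∀ i : Fin ℓ, i ≠ ⟨0, hℓ⟩ → M i ⟨0, hℓ⟩ = 0) ∧
        d = sSup {x : ℝ | ∃ u : Fin ℓ → ℝ, ∑ i, u i ^ 2 = 1 ∧
          x = ∑ i, ((k i : ℝ) / n) * (1 - (M.mulVec u i) ^ 2) ^ 2}} := by
  congr 1
  apply Set.Subset.antisymm
  · rintro d ⟨M, hM, rfl⟩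
    set z : Fin ℓ := ⟨0, hℓ⟩
    have hdet : IsUnit M.det := (Matrix.isUnit_iff_isUnit_det M).mp hM
    set w : Fin ℓ → ℝ := M⁻¹.mulVec (Pi.single z 1) with hw_def
    have hMw : M.mulVec w = Pi.single z 1 := by
      rw [hw_def, Matrix.mulVec_mulVec, Matrix.mul_nonsing_inv M hdet, Matrix.one_mulVec]
    have hwne : w ≠ 0 := by
      intro h
      have : M.mulVec w = 0 := by rw [h, Matrix.mulVec_zero]
      rw [hMw] at this
      have := congrFun this z
      simp at this
    have hsumpos : 0 < ∑ i, w i ^ 2 := by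
      obtain ⟨i, hi⟩ := Function.ne_iff.mp hwne
      exact Finset.sum_pos' (fun j _ => sq_nonneg _)
        ⟨i, Finset.mem_univ i, sq_pos_of_ne_zero hi⟩
    set c : ℝ := Real.sqrt (∑ i, w i ^ 2) with hc_def
    have hcpos : 0 < c := Real.sqrt_pos.mpr hsumpos
    set q : Fin ℓ → ℝ := c⁻¹ • w with hq_def
    have hq : ∑ i, q i ^ 2 = 1 := by
      have hc2 : c ^ 2 = ∑ i, w i ^ 2 := Real.sq_sqrt hsumpos.le
      have : ∑ i, q i ^ 2 = c⁻¹ ^ 2 * ∑ i, w i ^ 2 := by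
        rw [Finset.mul_sum]
        refine Finset.sum_congr rfl fun i _ => ?_
        simp [hq_def, mul_pow]
      rw [this, ← hc2]
      field_simp
    obtain ⟨Q, hQ, hQcol⟩ := exists_orth_with_col z q hq
    have hQunit : IsUnit Q := (Matrix.isUnit_iff_isUnit_det Q).mpr (Matrix.isUnit_det_of_left_inverse hQ)
    refine ⟨M * Q, hM.mul hQunit, ?_, ?_⟩
    · intro i hi
      have : (M * Q) i z = (M.mulVec q) i := by
        simp [Matrix.mul_apply, Matrix.mulVec, dotProduct, hQcol]
      rw [this, hq_def, Matrix.mulVec_smul, hMw]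
      simp [Pi.single_apply, hi]
    · rw [sup_set_eq M Q hQ k n]
  · rintro d ⟨M, hM, _, rfl⟩
    exact ⟨M, hM, rfl⟩
end

section
/- Let (V₁, V₂, β) be a step-two datum and g_v a vertical metric on V₂. Then the following are equivalent: (a) for every T ∈ V₂ with g_v(T,T) = 1, J_T ∘ J_T = −Id on V₁; (b) for every X ∈ V₁ with ‖X‖ = 1, the restriction of ad_X to (ker ad_X)ᗮ is a bijection onto V₂ and satisfies g_v(ad_X Z, ad_X Z) = ‖Z‖² for every Z ∈ (ker ad_X)ᗮ. -/
open scoped RealInnerProductSpace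

section KaplanAux

variable {V₁ V₂ : Type*} [NormedAddCommGroup V₁] [InnerProductSpace ℝ V₁]
  [FiniteDimensional ℝ V₁] [AddCommGroup V₂] [Module ℝ V₂] [FiniteDimensional ℝ V₂]

lemma exists_kaplan (β : V₁ →ₗ[ℝ] V₁ →ₗ[ℝ] V₂) (gv : V₂ →ₗ[ℝ] V₂ →ₗ[ℝ] ℝ) (S : V₂) :
    ∃ J : V₁ →ₗ[ℝ] V₁, IsKaplan β gv S J := by
  refine ⟨{ toFun := fun U => (InnerProductSpace.toDual ℝ V₁).symm
              (LinearMap.toContinuousLinearMap ((gv.flip S).comp (β U))),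
            map_add' := ?_, map_smul' := ?_ }, ?_⟩
  · intro U U'
    simp [map_add, LinearMap.comp_add]
  · intro c U
    simp [map_smul, LinearMap.comp_smul]
  · intro U W
    simp only [LinearMap.coe_mk, AddHom.coe_mk]
    rw [InnerProductSpace.toDual_symm_apply]
    rfl

end KaplanAux

/-- Kaplan / Cowling–Dooley–Korányi–Ricci characterization of H-type structure:
`J_T² = -Id` for all `g_v`-unit `T` iff for every horizontal unit vector `X`, the map
`ad_X = β(X,·)` restricted to `(ker ad_X)ᗮ` is a bijection onto `V₂` which is isometric
as a map into `(V₂, g_v)`. -/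

theorem h_type_iff_adjoint_isometry {V₁ V₂ : Type*}
    [NormedAddCommGroup V₁] [InnerProductSpace ℝ V₁] [FiniteDimensional ℝ V₁]
    [AddCommGroup V₂] [Module ℝ V₂] [FiniteDimensional ℝ V₂]
    (β : V₁ →ₗ[ℝ] V₁ →ₗ[ℝ] V₂) (hβ : IsStepTwoDatum β)
    (gv : V₂ →ₗ[ℝ] V₂ →ₗ[ℝ] ℝ) (hgv : IsVerticalMetric gv) :
    (∀ T : V₂, gv T T = 1 → ∀ J : V₁ →ₗ[ℝ] V₁, IsKaplan β gv T J →
      J ∘ₗ J = -LinearMap.id) ↔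
    (∀ X : V₁, ‖X‖ = 1 →
      Set.BijOn (β X) ((LinearMap.ker (β X))ᗮ : Set V₁) (Set.univ : Set V₂) ∧
      ∀ Z ∈ (LinearMap.ker (β X))ᗮ, gv (β X Z) (β X Z) = ‖Z‖ ^ 2) := by

  obtain ⟨-, -, halt, -⟩ := hβ
  obtain ⟨hsymm, hpos⟩ := hgv
  have hanti : ∀ U W : V₁, β U W = -β W U := by
    intro U W
    have h := halt (U + W)
    simp only [map_add, LinearMap.add_apply, halt U, halt W, zero_add, add_zero] at h
    first
    | exact eq_neg_of_add_eq_zero_left h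
    | exact eq_neg_of_add_eq_zero_right h
  have hnd : ∀ R : V₂, (∀ S : V₂, gv R S = 0) → R = 0 := by
    intro R hR
    by_contra h0
    exact (hpos R h0).ne' (hR R)
  have hskew : ∀ (S : V₂) (JS : V₁ →ₗ[ℝ] V₁), IsKaplan β gv S JS →
      ∀ U W : V₁, ⟪JS U, W⟫ = -⟪U, JS W⟫ := by
    intro S JS hJS U W
    rw [hJS U W, hanti U W, map_neg, LinearMap.neg_apply, ← hJS W U,
      real_inner_comm (JS W) U]
  constructor
  · -- forward direction
    intro ha X hX
    have hsq : ∀ (R : V₂) (JR : V₁ →ₗ[ℝ] V₁), IsKaplan β gv R JR →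
        ∀ U : V₁, JR (JR U) = -(gv R R • U) := by
      intro R JR hJR U
      by_cases h0 : R = 0
      · subst h0
        have hJ0 : JR = 0 := by
          refine LinearMap.ext fun u => ?_
          refine ext_inner_right ℝ fun w => ?_
          rw [hJR u w]
          simp
        simp [hJ0]
      · have hgvRR : 0 < gv R R := hpos R h0
        set t := Real.sqrt (gv R R) with ht
        have htpos : 0 < t := Real.sqrt_pos.mpr hgvRR
        have htne : t ≠ 0 := htpos.ne'
        have ht2 : t * t = gv R R := Real.mul_self_sqrt hgvRR.le
        have hK : IsKaplan β gv (t⁻¹ • R) (t⁻¹ • JR) := by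
          intro U' W
          rw [LinearMap.smul_apply, real_inner_smul_left, hJR U' W, map_smul, smul_eq_mul]
        have hunit : gv (t⁻¹ • R) (t⁻¹ • R) = 1 := by
          simp only [map_smul, LinearMap.smul_apply, smul_eq_mul]
          rw [← ht2]
          field_simp
        have hcomp := ha _ hunit _ hK
        have happ : (t⁻¹ * t⁻¹) • JR (JR U) = -U := by
          have h := DFunLike.congr_fun hcomp U
          simpa [smul_smul, map_smul, mul_comm] using h
        have hrw : JR (JR U) = (t * t) • ((t⁻¹ * t⁻¹) • JR (JR U)) := by
          rw [smul_smul]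
          have hone : (t * t) * (t⁻¹ * t⁻¹) = 1 := by field_simp
          rw [hone, one_smul]
        rw [hrw, happ, ht2, smul_neg]
    have hac : ∀ (S T' : V₂) (JS JT : V₁ →ₗ[ℝ] V₁), IsKaplan β gv S JS →
        IsKaplan β gv T' JT → ∀ U : V₁,
        JS (JT U) + JT (JS U) = -((2 * gv S T') • U) := by
      intro S T' JS JT hJS hJT U
      have hK : IsKaplan β gv (S + T') (JS + JT) := by
        intro U' W
        rw [LinearMap.add_apply, inner_add_left, hJS U' W, hJT U' W, map_add]
      have e1 := hsq (S + T') (JS + JT) hK U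
      simp only [LinearMap.add_apply, map_add] at e1
      rw [hsq S JS hJS U, hsq T' JT hJT U, hsymm T' S] at e1
      linear_combination (norm := module) e1
    have hXX : ⟪X, X⟫ = 1 := by rw [real_inner_self_eq_norm_sq, hX, one_pow]
    have hinner : ∀ (S T' : V₂) (JS JT : V₁ →ₗ[ℝ] V₁), IsKaplan β gv S JS →
        IsKaplan β gv T' JT → ⟪JS X, JT X⟫ = gv S T' := by
      intro S T' JS JT hJS hJT
      have h1 : ⟪JS X, JT X⟫ = -⟪X, JS (JT X)⟫ := hskew S JS hJS X (JT X)
      have h2 : ⟪JS X, JT X⟫ = -⟪X, JT (JS X)⟫ := by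
        rw [real_inner_comm]
        exact hskew T' JT hJT X (JS X)
      have h3 := hac S T' JS JT hJS hJT X
      have h4 : ⟪X, JS (JT X) + JT (JS X)⟫ = -(2 * gv S T') := by
        rw [h3, inner_neg_right, real_inner_smul_right, hXX, mul_one]
      rw [inner_add_right] at h4
      linarith
    have hmem : ∀ (S : V₂) (JS : V₁ →ₗ[ℝ] V₁), IsKaplan β gv S JS →
        JS X ∈ (LinearMap.ker (β X))ᗮ := by
      intro S JS hJS
      rw [Submodule.mem_orthogonal]
      intro u hu
      rw [real_inner_comm, hJS X u, LinearMap.mem_ker.mp hu]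
      simp
    have hinj : Set.InjOn (β X) ((LinearMap.ker (β X))ᗮ : Set V₁) := by
      intro Z hZ Z' hZ' hZZ
      have hk : Z - Z' ∈ LinearMap.ker (β X) := by
        rw [LinearMap.mem_ker, map_sub, sub_eq_zero]
        exact hZZ
      have ho : Z - Z' ∈ (LinearMap.ker (β X))ᗮ := Submodule.sub_mem _ hZ hZ'
      have h0 : ⟪Z - Z', Z - Z'⟫ = 0 := Submodule.inner_right_of_mem_orthogonal hk ho
      exact sub_eq_zero.mp (inner_self_eq_zero.mp h0)
    have hsurj : ∀ T' : V₂, ∃ Z ∈ (LinearMap.ker (β X))ᗮ, β X Z = T' ∧ ⟪Z, Z⟫ = gv T' T' := by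
      intro T'
      obtain ⟨JT, hJT⟩ := exists_kaplan β gv T'
      refine ⟨JT X, hmem T' JT hJT, ?_, hinner T' T' JT JT hJT hJT⟩
      have hz : ∀ S : V₂, gv (β X (JT X) - T') S = 0 := by
        intro S
        obtain ⟨JS, hJS⟩ := exists_kaplan β gv S
        rw [map_sub, LinearMap.sub_apply, ← hJS X (JT X),
          hinner S T' JS JT hJS hJT, hsymm T' S, sub_self]
      exact sub_eq_zero.mp (hnd _ hz)
    refine ⟨⟨fun Z _ => Set.mem_univ _, hinj, ?_⟩, ?_⟩
    · intro T' _
      obtain ⟨Z, hZ, hβZ, -⟩ := hsurj T'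
      exact ⟨Z, hZ, hβZ⟩
    · intro Z hZ
      obtain ⟨Z₀, hZ₀K, hβ₀, hn₀⟩ := hsurj (β X Z)
      have hZZ : Z₀ = Z := hinj hZ₀K hZ hβ₀
      subst hZZ
      rw [← hn₀, real_inner_self_eq_norm_sq]
  · -- backward direction
    intro hb T hT J hJ
    have key : ∀ X : V₁, ‖X‖ = 1 → β X (J X) = T ∧ ‖J X‖ = 1 := by
      intro X hX
      obtain ⟨⟨hmap, hinj, hsurjOn⟩, hiso⟩ := hb X hX
      have hpol : ∀ Z ∈ (LinearMap.ker (β X))ᗮ, ∀ Z' ∈ (LinearMap.ker (β X))ᗮ,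
          gv (β X Z) (β X Z') = ⟪Z, Z'⟫ := by
        intro Z hZ Z' hZ'
        have hs := hiso (Z + Z') (Submodule.add_mem _ hZ hZ')
        have h1 := hiso Z hZ
        have h2 := hiso Z' hZ'
        simp only [map_add, LinearMap.add_apply] at hs
        have hnorm : ‖Z + Z'‖ ^ 2 = ‖Z‖ ^ 2 + 2 * ⟪Z, Z'⟫ + ‖Z'‖ ^ 2 := by
          rw [← real_inner_self_eq_norm_sq, ← real_inner_self_eq_norm_sq,
            ← real_inner_self_eq_norm_sq, real_inner_add_add_self]
        have hsym' := hsymm (β X Z') (β X Z)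
        linarith
      have hJXmem : J X ∈ (LinearMap.ker (β X))ᗮ := by
        rw [Submodule.mem_orthogonal]
        intro u hu
        rw [real_inner_comm, hJ X u, LinearMap.mem_ker.mp hu]
        simp
      obtain ⟨Z₀, hZ₀K, hZ₀⟩ : ∃ Z₀ ∈ (LinearMap.ker (β X))ᗮ, β X Z₀ = T := by
        obtain ⟨Z₀, h, h'⟩ := hsurjOn (Set.mem_univ T)
        exact ⟨Z₀, h, h'⟩
      have hJZ : J X = Z₀ := by
        have hgen : ∀ W ∈ (LinearMap.ker (β X))ᗮ, ⟪J X - Z₀, W⟫ = 0 := by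
          intro W hW
          rw [inner_sub_left, hJ X W, ← hZ₀, hpol W hW Z₀ hZ₀K,
            real_inner_comm Z₀ W]
          ring
        have h0 := hgen _ (Submodule.sub_mem _ hJXmem hZ₀K)
        exact sub_eq_zero.mp (inner_self_eq_zero.mp h0)
      refine ⟨by rw [hJZ, hZ₀], ?_⟩
      have hsq1 : ‖J X‖ ^ 2 = 1 := by
        rw [← real_inner_self_eq_norm_sq, hJZ, ← hpol Z₀ hZ₀K Z₀ hZ₀K, hZ₀, hT]
      rw [← Real.sqrt_sq (norm_nonneg (J X)), hsq1, Real.sqrt_one]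
    refine LinearMap.ext fun X => ?_
    rcases eq_or_ne X 0 with rfl | hX0
    · simp
    · set c := ‖X‖ with hcdef
      have hc : c ≠ 0 := norm_ne_zero_iff.mpr hX0
      set X' := c⁻¹ • X with hX'
      have hX'1 : ‖X'‖ = 1 := by
        rw [hX', norm_smul, norm_inv, Real.norm_eq_abs, abs_of_nonneg (norm_nonneg X)]
        exact inv_mul_cancel₀ hc
      have main : J (J X') = -X' := by
        obtain ⟨hb1, hn1⟩ := key X' hX'1
        obtain ⟨hb2, hn2⟩ := key (J X') hn1
        have hip : ⟪J (J X'), X'⟫ = -1 := by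
          rw [hJ (J X') X', hanti (J X') X', hb1, map_neg, LinearMap.neg_apply, hT]
        have hz2 : ‖J (J X') + X'‖ ^ 2 = 0 := by
          rw [← real_inner_self_eq_norm_sq, real_inner_add_add_self,
            real_inner_self_eq_norm_sq, real_inner_self_eq_norm_sq, hn2, hX'1, hip]
          norm_num
        have hz : J (J X') + X' = 0 := by
          have hn : ‖J (J X') + X'‖ = 0 := by
            nlinarith [norm_nonneg (J (J X') + X')]
          exact norm_eq_zero.mp hn
        exact eq_neg_of_add_eq_zero_left hz
      have hXc : c • X' = X := by
        rw [hX', smul_smul, mul_inv_cancel₀ hc, one_smul]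
      simp only [LinearMap.comp_apply, LinearMap.neg_apply, LinearMap.id_apply]
      rw [← hXc, map_smul, map_smul, main, smul_neg]
end

section
/- Let (V₁, V₂, β) be a step-two datum with dim V₁ = m. If there exists a vertical metric g_v on V₂ with δ(g_v) < 1/√m, then for every nonzero X ∈ V₁ the restriction of ad_X to (ker ad_X)ᗮ is a linear isomorphism onto V₂; in particular, ad_X is surjective for every nonzero X ∈ V₁. -/
open scoped RealInnerProductSpace

section AuxHS

variable {V : Type*} [NormedAddCommGroup V] [InnerProductSpace ℝ V] [FiniteDimensional ℝ V]

lemma trace_adjoint_comp_eq_sum {ι : Type*} [Fintype ι] [DecidableEq ι]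
    (b : OrthonormalBasis ι ℝ V) (A : V →ₗ[ℝ] V) :
    LinearMap.trace ℝ V (LinearMap.adjoint A ∘ₗ A) = ∑ i, ‖A (b i)‖ ^ 2 := by
  rw [LinearMap.trace_eq_matrix_trace ℝ b.toBasis, Matrix.trace]
  refine Finset.sum_congr rfl fun i _ => ?_
  rw [Matrix.diag_apply, LinearMap.toMatrix_apply, OrthonormalBasis.coe_toBasis,
    OrthonormalBasis.coe_toBasis_repr_apply, OrthonormalBasis.repr_apply_apply,
    LinearMap.comp_apply, LinearMap.adjoint_inner_right]
  exact real_inner_self_eq_norm_sq _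

lemma one_le_hsNorm_of_fixed {A : V →ₗ[ℝ] V} {x : V} (hx : ‖x‖ = 1) (hAx : A x = x) :
    1 ≤ hsNorm A := by
  classical
  have hon : Orthonormal ℝ ((↑) : ({x} : Set V) → V) := by
    refine ⟨fun i => ?_, fun i j hij => absurd ?_ hij⟩
    · rcases i with ⟨i, hi⟩
      simp only [Set.mem_singleton_iff] at hi
      simpa [hi] using hx
    · apply Subtype.ext
      rcases i with ⟨i, hi⟩; rcases j with ⟨j, hj⟩
      simp only [Set.mem_singleton_iff] at hi hj
      simp [hi, hj]
  obtain ⟨u, b, hxu, hb⟩ := hon.exists_orthonormalBasis_extension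
  have hxu' : x ∈ u := by
    have := hxu (Set.mem_singleton x)
    exact_mod_cast this
  rw [hsNorm, trace_adjoint_comp_eq_sum b A, Real.one_le_sqrt]
  calc (1 : ℝ) = ‖A (b ⟨x, hxu'⟩)‖ ^ 2 := by
        rw [show b ⟨x, hxu'⟩ = x from by rw [hb], hAx, hx]; norm_num
    _ ≤ ∑ i, ‖A (b i)‖ ^ 2 :=
        Finset.single_le_sum (f := fun i : u => ‖A (b i)‖ ^ 2) (fun i _ => sq_nonneg _)
          (Finset.mem_univ (⟨x, hxu'⟩ : u))

lemma hsNorm_le_of_bound {A : V →ₗ[ℝ] V} {c : ℝ} (hc : 0 ≤ c)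
    (h : ∀ v, ‖A v‖ ≤ c * ‖v‖) :
    hsNorm A ≤ Real.sqrt ((Module.finrank ℝ V) * c ^ 2) := by
  classical
  set b := stdOrthonormalBasis ℝ V
  rw [hsNorm, trace_adjoint_comp_eq_sum b A]
  apply Real.sqrt_le_sqrt
  calc ∑ i, ‖A (b i)‖ ^ 2 ≤ ∑ _i : Fin (Module.finrank ℝ V), c ^ 2 := by
        refine Finset.sum_le_sum fun i _ => ?_
        have h1 : ‖A (b i)‖ ≤ c := by
          have := h (b i)
          rwa [b.orthonormal.1 i, mul_one] at this
        exact pow_le_pow_left₀ (norm_nonneg _) h1 2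
    _ = (Module.finrank ℝ V) * c ^ 2 := by
        simp [Finset.sum_const, mul_comm]

end AuxHS

/-- Rigidity: if some vertical metric has H-type deviation less than `1/√m`
(`m = dim V₁`), then the datum is an algebraic H-type group: for every nonzero
horizontal `X`, `ad_X = β(X,·)` restricts to a linear isomorphism from
`(ker ad_X)ᗮ` onto `V₂`; in particular `ad_X` is surjective. -/
theorem small_deviation_implies_algebraic_h_type {V₁ V₂ : Type*}
    [NormedAddCommGroup V₁] [InnerProductSpace ℝ V₁] [FiniteDimensional ℝ V₁]
    [AddCommGroup V₂] [Module ℝ V₂] [FiniteDimensional ℝ V₂]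
    (β : V₁ →ₗ[ℝ] V₁ →ₗ[ℝ] V₂) (hβ : IsStepTwoDatum β)
    (m : ℕ) (hm : m = Module.finrank ℝ V₁)
    (gv : V₂ →ₗ[ℝ] V₂ →ₗ[ℝ] ℝ) (hgv : IsVerticalMetric gv)
    (hdev : deviationOf β gv < 1 / Real.sqrt m) :
    (∀ X : V₁, X ≠ 0 →
      Set.BijOn (β X) ((LinearMap.ker (β X))ᗮ : Set V₁) (Set.univ : Set V₂)) ∧
    (∀ X : V₁, X ≠ 0 → Function.Surjective (β X)) := by
  classical
  obtain ⟨hV₁, hV₂, halt, hspan⟩ := hβ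
  -- Inner product structure on V₂ induced by `gv`.
  letI core : InnerProductSpace.Core ℝ V₂ :=
    { inner := fun u v => gv u v
      conj_inner_symm := fun u v => by
        simpa [starRingEnd_apply] using hgv.1 v u
      re_inner_nonneg := fun u => by
        rcases eq_or_ne u 0 with h | h
        · simp [h]
        · simpa using (hgv.2 u h).le
      add_left := fun u v w => by simp
      smul_left := fun u v r => by simp [starRingEnd_apply]
      definite := fun u hu => by
        by_contra h
        exact absurd hu (ne_of_gt (hgv.2 u h)) }
  letI : NormedAddCommGroup V₂ := core.toNormedAddCommGroup
  letI : InnerProductSpace ℝ V₂ := InnerProductSpace.ofCore core.toCore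
  have hinner : ∀ u v : V₂, ⟪u, v⟫ = gv u v := fun _ _ => rfl
  have hm0 : 0 < m := hm ▸ hV₁
  have hsqm : 0 < Real.sqrt m := Real.sqrt_pos.2 (by exact_mod_cast hm0)
  -- the set appearing in the deviation
  set S : Set ℝ := {x : ℝ | ∃ T : V₂, ∃ J : V₁ →ₗ[ℝ] V₁,
      gv T T = 1 ∧ IsKaplan β gv T J ∧ x = hsNorm (J ∘ₗ J + LinearMap.id)} with hSdef
  have hsup : sSup S < 1 := by
    have h : (Real.sqrt (Module.finrank ℝ V₁))⁻¹ * sSup S < 1 / Real.sqrt m := hdev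
    rw [← hm, one_div] at h
    have h' : (Real.sqrt m)⁻¹ * sSup S < (Real.sqrt m)⁻¹ * 1 := by rwa [mul_one]
    exact lt_of_mul_lt_mul_left h' (inv_nonneg.2 hsqm.le)
  -- uniform bound on the bracket
  obtain ⟨c₀, hc₀, hβbound⟩ : ∃ c₀ : ℝ, 0 ≤ c₀ ∧ ∀ v w : V₁, ‖β v w‖ ≤ c₀ * ‖v‖ * ‖w‖ := by
    set b := stdOrthonormalBasis ℝ V₁ with hb
    refine ⟨∑ i, ∑ j, ‖β (b i) (b j)‖, by positivity, fun v w => ?_⟩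
    have hv : β v w = ∑ i, ∑ j, (⟪b i, v⟫ * ⟪b j, w⟫) • β (b i) (b j) := by
      conv_lhs => rw [← b.sum_repr' v, ← b.sum_repr' w]
      simp only [map_sum, map_smul, LinearMap.sum_apply, LinearMap.smul_apply,
        Finset.smul_sum, smul_smul]
      rw [Finset.sum_comm]
      exact Finset.sum_congr rfl fun i _ => Finset.sum_congr rfl fun j _ => by rw [mul_comm]
    rw [hv]
    have step1 : ‖∑ i, ∑ j, (⟪b i, v⟫ * ⟪b j, w⟫) • β (b i) (b j)‖ ≤
        ∑ i, ∑ j, ‖(⟪b i, v⟫ * ⟪b j, w⟫) • β (b i) (b j)‖ := by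
      refine (norm_sum_le _ _).trans (Finset.sum_le_sum fun i _ => norm_sum_le _ _)
    refine step1.trans ?_
    have step2 : ∀ i j, ‖(⟪b i, v⟫ * ⟪b j, w⟫) • β (b i) (b j)‖ ≤
        ‖β (b i) (b j)‖ * (‖v‖ * ‖w‖) := by
      intro i j
      rw [norm_smul]
      have h1 : |⟪b i, v⟫| ≤ ‖v‖ := by
        have := abs_real_inner_le_norm (b i) v
        rwa [b.orthonormal.1 i, one_mul] at this
      have h2 : |⟪b j, w⟫| ≤ ‖w‖ := by
        have := abs_real_inner_le_norm (b j) w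
        rwa [b.orthonormal.1 j, one_mul] at this
      have h3 : ‖⟪b i, v⟫ * ⟪b j, w⟫‖ ≤ ‖v‖ * ‖w‖ := by
        rw [norm_mul]
        exact mul_le_mul (h1.trans_eq rfl) (h2.trans_eq rfl) (abs_nonneg _) (norm_nonneg v)
      calc ‖⟪b i, v⟫ * ⟪b j, w⟫‖ * ‖β (b i) (b j)‖
          ≤ (‖v‖ * ‖w‖) * ‖β (b i) (b j)‖ :=
            mul_le_mul_of_nonneg_right h3 (norm_nonneg _)
        _ = ‖β (b i) (b j)‖ * (‖v‖ * ‖w‖) := by ring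
    calc ∑ i, ∑ j, ‖(⟪b i, v⟫ * ⟪b j, w⟫) • β (b i) (b j)‖
        ≤ ∑ i, ∑ j, ‖β (b i) (b j)‖ * (‖v‖ * ‖w‖) :=
          Finset.sum_le_sum fun i _ => Finset.sum_le_sum fun j _ => step2 i j
      _ = (∑ i, ∑ j, ‖β (b i) (b j)‖) * ‖v‖ * ‖w‖ := by
          rw [Finset.sum_mul, Finset.sum_mul]
          refine Finset.sum_congr rfl fun i _ => ?_
          rw [Finset.sum_mul, Finset.sum_mul]
          refine Finset.sum_congr rfl fun j _ => ?_
          ring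
  -- boundedness of S
  have hbdd : BddAbove S := by
    refine ⟨Real.sqrt (m * (c₀ ^ 2 + 1) ^ 2), fun x hx => ?_⟩
    obtain ⟨T, J, hTT, hK, rfl⟩ := hx
    have hT1 : ‖T‖ = 1 := by
      have h2 : ‖T‖ ^ 2 = 1 := by
        rw [← real_inner_self_eq_norm_sq, hinner, hTT]
      nlinarith [norm_nonneg T]
    have hJ : ∀ v, ‖J v‖ ≤ c₀ * ‖v‖ := by
      intro v
      rcases eq_or_ne (J v) 0 with h | h
      · rw [h, norm_zero]; positivity
      · have h1 : ‖J v‖ ^ 2 = gv (β v (J v)) T := by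
          rw [← real_inner_self_eq_norm_sq]; exact hK v (J v)
        have h2 : gv (β v (J v)) T ≤ ‖β v (J v)‖ * ‖T‖ := by
          rw [← hinner]; exact real_inner_le_norm _ _
        rw [hT1, mul_one] at h2
        have h3 : ‖β v (J v)‖ ≤ c₀ * ‖v‖ * ‖J v‖ := hβbound v (J v)
        have h4 : 0 < ‖J v‖ := norm_pos_iff.2 h
        have h5 : ‖J v‖ * ‖J v‖ ≤ (c₀ * ‖v‖) * ‖J v‖ := by nlinarith
        exact le_of_mul_le_mul_right h5 h4
    have hA : ∀ v, ‖(J ∘ₗ J + LinearMap.id : V₁ →ₗ[ℝ] V₁) v‖ ≤ (c₀ ^ 2 + 1) * ‖v‖ := by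
      intro v
      have hv : (J ∘ₗ J + LinearMap.id : V₁ →ₗ[ℝ] V₁) v = J (J v) + v := rfl
      rw [hv]
      have h5 := hJ (J v)
      have h6 := hJ v
      calc ‖J (J v) + v‖ ≤ ‖J (J v)‖ + ‖v‖ := norm_add_le _ _
        _ ≤ (c₀ ^ 2 + 1) * ‖v‖ := by nlinarith [norm_nonneg v, norm_nonneg (J v)]
    have h7 := hsNorm_le_of_bound (by positivity) hA
    rwa [← hm] at h7
  -- surjectivity
  have hsurj : ∀ X : V₁, X ≠ 0 → Function.Surjective (β X) := by
    intro X hX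
    by_contra hns
    have hrange : LinearMap.range (β X) ≠ ⊤ := by
      simpa [LinearMap.range_eq_top] using hns
    have hbot : (LinearMap.range (β X))ᗮ ≠ ⊥ := by
      intro h
      exact hrange (Submodule.orthogonal_eq_bot_iff.1 h)
    obtain ⟨T₀, hT₀mem, hT₀⟩ := Submodule.exists_mem_ne_zero_of_ne_bot hbot
    have hT0norm : ‖T₀‖ ≠ 0 := norm_ne_zero_iff.2 hT₀
    set T : V₂ := ‖T₀‖⁻¹ • T₀ with hTdef
    have hTnorm : ‖T‖ = 1 := by
      rw [hTdef, norm_smul, norm_inv, norm_norm, inv_mul_cancel₀ hT0norm]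
    have hTmem : T ∈ (LinearMap.range (β X))ᗮ := Submodule.smul_mem _ _ hT₀mem
    have hTT : gv T T = 1 := by
      rw [← hinner, real_inner_self_eq_norm_sq, hTnorm]; norm_num
    have hgvT : ∀ W : V₁, gv (β X W) T = 0 := by
      intro W
      have := (Submodule.mem_orthogonal _ _).1 hTmem (β X W) ⟨W, rfl⟩
      rw [← hinner]
      exact this
    -- the Kaplan operator for T
    let Jfun : V₁ → V₁ := fun U =>
      (InnerProductSpace.toDual ℝ V₁).symm
        (LinearMap.toContinuousLinearMap ((gv.flip T) ∘ₗ (β U)))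
    have hKfun : ∀ U W : V₁, ⟪Jfun U, W⟫ = gv (β U W) T := by
      intro U W
      rw [show Jfun U = (InnerProductSpace.toDual ℝ V₁).symm
        (LinearMap.toContinuousLinearMap ((gv.flip T) ∘ₗ (β U))) from rfl,
        InnerProductSpace.toDual_symm_apply]
      rw [LinearMap.coe_toContinuousLinearMap']
      rfl
    let J : V₁ →ₗ[ℝ] V₁ :=
      { toFun := Jfun
        map_add' := fun U U' => by
          apply ext_inner_right ℝ
          intro w
          rw [inner_add_left, hKfun, hKfun, hKfun]
          simp
        map_smul' := fun r U => by
          apply ext_inner_right ℝ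
          intro w
          rw [RingHom.id_apply, real_inner_smul_left, hKfun, hKfun]
          simp }
    have hK : IsKaplan β gv T J := hKfun
    have hJX : J X = 0 := by
      have h0 : ⟪J X, J X⟫ = 0 := by
        rw [hK X (J X)]
        exact hgvT (J X)
      exact inner_self_eq_zero.1 h0
    set x₁ : V₁ := ‖X‖⁻¹ • X with hx₁def
    have hXnorm : ‖X‖ ≠ 0 := norm_ne_zero_iff.2 hX
    have hx₁ : ‖x₁‖ = 1 := by
      rw [hx₁def, norm_smul, norm_inv, norm_norm, inv_mul_cancel₀ hXnorm]
    have hAx : (J ∘ₗ J + LinearMap.id : V₁ →ₗ[ℝ] V₁) x₁ = x₁ := by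
      have hJx₁ : J x₁ = 0 := by rw [hx₁def, map_smul, hJX, smul_zero]
      show J (J x₁) + x₁ = x₁
      rw [hJx₁, map_zero, zero_add]
    have hge : 1 ≤ hsNorm (J ∘ₗ J + LinearMap.id) := one_le_hsNorm_of_fixed hx₁ hAx
    have hmem : hsNorm (J ∘ₗ J + LinearMap.id) ∈ S := ⟨T, J, hTT, hK, rfl⟩
    have hle := le_csSup hbdd hmem
    linarith
  refine ⟨fun X hX => ?_, hsurj⟩
  have hs := hsurj X hX
  refine ⟨fun v _ => trivial, ?_, ?_⟩
  · intro u hu v hv huv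
    have hsub : u - v ∈ LinearMap.ker (β X) := by
      rw [LinearMap.mem_ker, map_sub, huv, sub_self]
    have hsub' : u - v ∈ (LinearMap.ker (β X))ᗮ := Submodule.sub_mem _ hu hv
    have h0 : u - v = 0 :=
      Submodule.disjoint_def.1 (Submodule.orthogonal_disjoint _).symm _ hsub' hsub
    exact sub_eq_zero.1 h0
  · intro T _
    obtain ⟨v, hv⟩ := hs T
    obtain ⟨y, hy, z, hz, rfl⟩ := (LinearMap.ker (β X)).exists_add_mem_mem_orthogonal v
    refine ⟨z, hz, ?_⟩
    rw [map_add] at hv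
    rw [LinearMap.mem_ker.1 hy, zero_add] at hv
    exact hv
end

section
/- Let (V₁, V₂, β) be a step-two datum with dim V₁ = m, let 0 < δ₀ < 1/√m, and let g_v be a vertical metric on V₂ with δ(g_v) < δ₀. Then for every X ∈ V₁ with ‖X‖ = 1 and every Z ∈ (ker ad_X)ᗮ, (1 − √m·δ₀)^{1/2}·‖Z‖ ≤ g_v(ad_X Z, ad_X Z)^{1/2} ≤ (1 + √m·δ₀)^{1/2}·‖Z‖. -/
open scoped RealInnerProductSpace

set_option maxHeartbeats 1000000
set_option linter.unusedSectionVars false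

section AuxLemmas

variable {V₁ V₂ : Type*} [NormedAddCommGroup V₁] [InnerProductSpace ℝ V₁]
  [FiniteDimensional ℝ V₁] [AddCommGroup V₂] [Module ℝ V₂] [FiniteDimensional ℝ V₂]

lemma gv_self_nonneg {gv : V₂ →ₗ[ℝ] V₂ →ₗ[ℝ] ℝ} (hgv : IsVerticalMetric gv) (T : V₂) :
    0 ≤ gv T T := by
  rcases eq_or_ne T 0 with h | h
  · simp [h]
  · exact (hgv.2 T h).le

lemma gv_cs_s11 {gv : V₂ →ₗ[ℝ] V₂ →ₗ[ℝ] ℝ} (hgv : IsVerticalMetric gv) (P Q : V₂) :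
    (gv P Q) ^ 2 ≤ gv P P * gv Q Q := by
  rcases eq_or_ne Q 0 with h | h
  · simp [h]
  · have hQ := hgv.2 Q h
    have key := gv_self_nonneg hgv ((gv Q Q) • P - (gv P Q) • Q)
    simp only [map_sub, map_smul, LinearMap.sub_apply, LinearMap.smul_apply, smul_eq_mul] at key
    have hsym := hgv.1 P Q
    rw [hsym] at key ⊢
    nlinarith [key, hQ]

lemma trace_eq_sum_inner' {n : ℕ} (A : V₁ →ₗ[ℝ] V₁) (e : OrthonormalBasis (Fin n) ℝ V₁) :
    LinearMap.trace ℝ V₁ A = ∑ i, ⟪e i, A (e i)⟫ := by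
  rw [LinearMap.trace_eq_matrix_trace ℝ e.toBasis, Matrix.trace]
  simp [Matrix.diag, LinearMap.toMatrix_apply, OrthonormalBasis.coe_toBasis,
    OrthonormalBasis.coe_toBasis_repr_apply, OrthonormalBasis.repr_apply_apply]

lemma hs_trace {n : ℕ} (A : V₁ →ₗ[ℝ] V₁) (e : OrthonormalBasis (Fin n) ℝ V₁) :
    LinearMap.trace ℝ V₁ (LinearMap.adjoint A ∘ₗ A) = ∑ i, ‖A (e i)‖ ^ 2 := by
  rw [trace_eq_sum_inner' _ e]
  refine Finset.sum_congr rfl fun i _ => ?_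
  rw [LinearMap.comp_apply, LinearMap.adjoint_inner_right, real_inner_self_eq_norm_sq]

lemma hsNorm_eq {n : ℕ} (A : V₁ →ₗ[ℝ] V₁) (e : OrthonormalBasis (Fin n) ℝ V₁) :
    hsNorm A = Real.sqrt (∑ i, ‖A (e i)‖ ^ 2) := by
  rw [hsNorm, hs_trace A e]

lemma parseval' {n : ℕ} (e : OrthonormalBasis (Fin n) ℝ V₁) (W : V₁) :
    ∑ i, ⟪e i, W⟫ ^ 2 = ‖W‖ ^ 2 := by
  have := e.sum_inner_mul_inner W W
  rw [real_inner_self_eq_norm_sq] at this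
  rw [← this]
  refine Finset.sum_congr rfl fun i _ => ?_
  rw [real_inner_comm W (e i)]; ring

lemma apply_norm_sq_le {n : ℕ} (A : V₁ →ₗ[ℝ] V₁) (e : OrthonormalBasis (Fin n) ℝ V₁) (W : V₁) :
    ‖A W‖ ^ 2 ≤ (∑ i, ‖A (e i)‖ ^ 2) * ‖W‖ ^ 2 := by
  have hW : A W = ∑ i, ⟪e i, W⟫ • A (e i) := by
    conv_lhs => rw [← e.sum_repr' W]
    rw [map_sum]
    simp [map_smul]
  have h1 : ‖A W‖ ≤ ∑ i, |⟪e i, W⟫| * ‖A (e i)‖ := by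
    rw [hW]
    refine (norm_sum_le _ _).trans ?_
    refine Finset.sum_le_sum fun i _ => ?_
    rw [norm_smul]
    simp
  have h2 : (∑ i, |⟪e i, W⟫| * ‖A (e i)‖) ^ 2 ≤
      (∑ i, |⟪e i, W⟫| ^ 2) * ∑ i, ‖A (e i)‖ ^ 2 :=
    Finset.sum_mul_sq_le_sq_mul_sq _ _ _
  have h3 : ∑ i, |⟪e i, W⟫| ^ 2 = ‖W‖ ^ 2 := by
    rw [← parseval' e W]
    exact Finset.sum_congr rfl fun i _ => sq_abs _
  calc ‖A W‖ ^ 2 ≤ (∑ i, |⟪e i, W⟫| * ‖A (e i)‖) ^ 2 := by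
        apply pow_le_pow_left₀ (norm_nonneg _) h1
    _ ≤ (∑ i, |⟪e i, W⟫| ^ 2) * ∑ i, ‖A (e i)‖ ^ 2 := h2
    _ = (∑ i, ‖A (e i)‖ ^ 2) * ‖W‖ ^ 2 := by rw [h3]; ring

/-- The Kaplan operator, constructed explicitly. -/
noncomputable def kap (β : V₁ →ₗ[ℝ] V₁ →ₗ[ℝ] V₂) (gv : V₂ →ₗ[ℝ] V₂ →ₗ[ℝ] ℝ) :
    V₂ →ₗ[ℝ] V₁ →ₗ[ℝ] V₁ where
  toFun S := ∑ i, ((gv.flip S).comp (β.flip ((stdOrthonormalBasis ℝ V₁) i))).smulRight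
      ((stdOrthonormalBasis ℝ V₁) i)
  map_add' S S' := by
    ext U
    simp [Finset.sum_add_distrib, add_smul]
  map_smul' c S := by
    ext U
    simp [Finset.smul_sum, smul_smul]

lemma kap_apply' (β : V₁ →ₗ[ℝ] V₁ →ₗ[ℝ] V₂) (gv : V₂ →ₗ[ℝ] V₂ →ₗ[ℝ] ℝ) (S : V₂) (U : V₁) :
    kap β gv S U
      = ∑ i, (gv (β U ((stdOrthonormalBasis ℝ V₁) i)) S) • (stdOrthonormalBasis ℝ V₁) i := by
  simp [kap]

lemma kap_isKaplan (β : V₁ →ₗ[ℝ] V₁ →ₗ[ℝ] V₂) (gv : V₂ →ₗ[ℝ] V₂ →ₗ[ℝ] ℝ) (S : V₂) :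
    IsKaplan β gv S (kap β gv S) := by
  intro U W
  rw [kap_apply', sum_inner]
  conv_rhs => rw [← (stdOrthonormalBasis ℝ V₁).sum_repr' W]
  rw [map_sum, map_sum, LinearMap.sum_apply]
  refine Finset.sum_congr rfl fun i _ => ?_
  rw [real_inner_smul_left]
  simp only [map_smul, LinearMap.smul_apply, smul_eq_mul]
  ring

/-- Polarization: a gv-symmetric operator with small quadratic form is small. -/
lemma quad_to_norm {gv : V₂ →ₗ[ℝ] V₂ →ₗ[ℝ] ℝ} (hgv : IsVerticalMetric gv) {ε : ℝ}
    (hε : 0 ≤ ε) (H : V₂ →ₗ[ℝ] V₂) (hsym : ∀ P Q, gv (H P) Q = gv (H Q) P)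
    (hq : ∀ W, |gv (H W) W| ≤ ε * gv W W) (S : V₂) :
    gv (H S) (H S) ≤ ε ^ 2 * gv S S := by
  set n := gv S S with hn
  set h := gv (H S) (H S) with hh
  have hn0 : 0 ≤ n := gv_self_nonneg hgv S
  have hh0 : 0 ≤ h := gv_self_nonneg hgv (H S)
  rcases eq_or_lt_of_le hh0 with h0 | hpos
  · rw [← h0]; positivity
  · have hSne : S ≠ 0 := by
      rintro rfl
      simp only [map_zero, LinearMap.zero_apply] at hh
      exact hpos.ne' hh
    have hnpos : 0 < n := hgv.2 S hSne
    set p := Real.sqrt (h / n) with hp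
    have hppos : 0 < p := Real.sqrt_pos.2 (div_pos hpos hnpos)
    set lam := Real.sqrt p with hlam
    have hlampos : 0 < lam := Real.sqrt_pos.2 hppos
    have hlamsq : lam ^ 2 = p := Real.sq_sqrt hppos.le
    -- key polarization identity
    set A := lam • S with hA
    set B := lam⁻¹ • (H S) with hB
    have hHAB : gv (H A) B = h := by
      simp only [hA, hB, map_smul, LinearMap.smul_apply, smul_eq_mul]
      field_simp
      exact hh.symm
    have hpol : gv (H (A + B)) (A + B) - gv (H (A - B)) (A - B) = 4 * h := by
      have e1 : gv (H B) A = gv (H A) B := hsym B A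
      simp only [map_add, map_sub, LinearMap.add_apply, LinearMap.sub_apply]
      rw [e1, hHAB]; ring
    have hqAB := hq (A + B)
    have hqAB' := hq (A - B)
    have hgAA : gv A A = p * n := by
      simp only [hA, map_smul, LinearMap.smul_apply, smul_eq_mul]
      rw [← hlamsq]; ring
    have hgBB : gv B B = p⁻¹ * h := by
      simp only [hB, map_smul, LinearMap.smul_apply, smul_eq_mul]
      rw [← hlamsq, sq, mul_inv]; ring
    have hsum : gv (A + B) (A + B) + gv (A - B) (A - B) = 2 * (p * n) + 2 * (p⁻¹ * h) := by
      simp only [map_add, map_sub, LinearMap.add_apply, LinearMap.sub_apply]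
      rw [hgAA, hgBB]; ring
    have hAB0 : 0 ≤ gv (A + B) (A + B) := gv_self_nonneg hgv _
    have hAB0' : 0 ≤ gv (A - B) (A - B) := gv_self_nonneg hgv _
    have h4 : 4 * h ≤ ε * (2 * (p * n) + 2 * (p⁻¹ * h)) := by
      have l1 : gv (H (A + B)) (A + B) ≤ ε * gv (A + B) (A + B) :=
        (le_abs_self _).trans (hqAB.trans (le_refl _))
      have l2 : -(ε * gv (A - B) (A - B)) ≤ gv (H (A - B)) (A - B) := by
        have := (abs_le.mp hqAB').1; linarith
      calc 4 * h = gv (H (A + B)) (A + B) - gv (H (A - B)) (A - B) := hpol.symm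
        _ ≤ ε * gv (A + B) (A + B) + ε * gv (A - B) (A - B) := by nlinarith [l1, l2]
        _ = ε * (2 * (p * n) + 2 * (p⁻¹ * h)) := by rw [← hsum]; ring
    have hsqrth : 0 < Real.sqrt h := Real.sqrt_pos.2 hpos
    have hsqrtn : 0 < Real.sqrt n := Real.sqrt_pos.2 hnpos
    have hpe : p = Real.sqrt h / Real.sqrt n := by rw [hp, Real.sqrt_div hh0]
    have hnn : Real.sqrt n * Real.sqrt n = n := Real.mul_self_sqrt hn0
    have hhh : Real.sqrt h * Real.sqrt h = h := Real.mul_self_sqrt hh0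
    have hpn : p * n = Real.sqrt h * Real.sqrt n := by
      rw [hpe]; field_simp; linear_combination -hnn
    have hph : p⁻¹ * h = Real.sqrt h * Real.sqrt n := by
      rw [hpe]; field_simp; linear_combination -hhh
    rw [hpn, hph] at h4
    have h5 : h ≤ ε * (Real.sqrt h * Real.sqrt n) := by linarith
    have h6 : Real.sqrt h ≤ ε * Real.sqrt n := by
      rw [← hhh] at h5
      by_contra hcon
      push_neg at hcon
      nlinarith [hsqrth]
    have h7 := mul_le_mul h6 h6 hsqrth.le (by positivity)
    calc h = Real.sqrt h * Real.sqrt h := hhh.symm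
      _ ≤ ε * Real.sqrt n * (ε * Real.sqrt n) := h7
      _ = ε ^ 2 * n := by linear_combination ε ^ 2 * hnn

end AuxLemmas

/-- Quantitative rigidity: if `δ(g_v) < δ₀ < 1/√m`, then for every horizontal unit
vector `X` and every `Z ∈ (ker ad_X)ᗮ`,
`(1 - √m·δ₀)^{1/2}‖Z‖ ≤ g_v(ad_X Z, ad_X Z)^{1/2} ≤ (1 + √m·δ₀)^{1/2}‖Z‖`. -/
theorem small_deviation_implies_approximate_h_type {V₁ V₂ : Type*}
    [NormedAddCommGroup V₁] [InnerProductSpace ℝ V₁] [FiniteDimensional ℝ V₁]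
    [AddCommGroup V₂] [Module ℝ V₂] [FiniteDimensional ℝ V₂]
    (β : V₁ →ₗ[ℝ] V₁ →ₗ[ℝ] V₂) (hβ : IsStepTwoDatum β)
    (m : ℕ) (hm : m = Module.finrank ℝ V₁)
    (δ₀ : ℝ) (hδ₀ : 0 < δ₀) (hδ₀' : δ₀ < 1 / Real.sqrt m)
    (gv : V₂ →ₗ[ℝ] V₂ →ₗ[ℝ] ℝ) (hgv : IsVerticalMetric gv)
    (hdev : deviationOf β gv < δ₀) :
    ∀ X : V₁, ‖X‖ = 1 → ∀ Z ∈ (LinearMap.ker (β X))ᗮ,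
      Real.sqrt (1 - Real.sqrt m * δ₀) * ‖Z‖ ≤ Real.sqrt (gv (β X Z) (β X Z)) ∧
      Real.sqrt (gv (β X Z) (β X Z)) ≤ Real.sqrt (1 + Real.sqrt m * δ₀) * ‖Z‖ := by
  intro X hX Z hZmem
  have hm1 : 0 < Module.finrank ℝ V₁ := hβ.1
  have hsm : 0 < Real.sqrt m := Real.sqrt_pos.2 (by rw [hm]; exact_mod_cast hm1)
  set ε := Real.sqrt m * δ₀ with hεdef
  have hε0 : 0 < ε := mul_pos hsm hδ₀
  have hε1 : ε < 1 := by
    rw [hεdef]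
    calc Real.sqrt m * δ₀ < Real.sqrt m * (1 / Real.sqrt m) :=
          mul_lt_mul_of_pos_left hδ₀' hsm
      _ = 1 := by field_simp
  -- bound on the Hilbert-Schmidt norm from the deviation hypothesis
  have hsupbound : ∀ (T : V₂) (J : V₁ →ₗ[ℝ] V₁), gv T T = 1 → IsKaplan β gv T J →
      hsNorm (J ∘ₗ J + LinearMap.id) ≤ ε := by
    intro T J hT hJ
    set e := stdOrthonormalBasis ℝ V₁ with he
    set C : ℝ := ∑ i, ∑ j, gv (β (e i) (e j)) (β (e i) (e j)) with hC
    have hC0 : 0 ≤ C :=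
      Finset.sum_nonneg fun i _ => Finset.sum_nonneg fun j _ => gv_self_nonneg hgv _
    have hgen : ∀ (T' : V₂) (J' : V₁ →ₗ[ℝ] V₁), gv T' T' = 1 → IsKaplan β gv T' J' →
        hsNorm (J' ∘ₗ J' + LinearMap.id)
          ≤ Real.sqrt (2 * C ^ 2 + 2 * (Module.finrank ℝ V₁)) := by
      intro T' J' hT' hJ'
      set KJ := ∑ i, ‖J' (e i)‖ ^ 2 with hKJ
      have hKJ0 : 0 ≤ KJ := Finset.sum_nonneg fun i _ => sq_nonneg _
      have hKJC : KJ ≤ C := by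
        rw [hKJ, hC]
        refine Finset.sum_le_sum fun i _ => ?_
        rw [← parseval' e (J' (e i))]
        refine Finset.sum_le_sum fun j _ => ?_
        rw [real_inner_comm (J' (e i)) (e j), hJ' (e i) (e j)]
        calc (gv (β (e i) (e j)) T') ^ 2
            ≤ gv (β (e i) (e j)) (β (e i) (e j)) * gv T' T' := gv_cs_s11 hgv _ _
          _ = gv (β (e i) (e j)) (β (e i) (e j)) := by rw [hT', mul_one]
      have hsum2 : ∑ i, ‖J' (J' (e i))‖ ^ 2 ≤ KJ * KJ := by
        calc ∑ i, ‖J' (J' (e i))‖ ^ 2 ≤ ∑ i, KJ * ‖J' (e i)‖ ^ 2 :=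
              Finset.sum_le_sum fun i _ => by
                have := apply_norm_sq_le J' e (J' (e i))
                rw [← hKJ] at this
                exact this
          _ = KJ * KJ := by rw [← Finset.mul_sum, ← hKJ]
      have hterm : ∀ i, ‖(J' ∘ₗ J' + LinearMap.id : V₁ →ₗ[ℝ] V₁) (e i)‖ ^ 2
          ≤ 2 * ‖J' (J' (e i))‖ ^ 2 + 2 := by
        intro i
        have h1 : (J' ∘ₗ J' + LinearMap.id : V₁ →ₗ[ℝ] V₁) (e i) = J' (J' (e i)) + e i := by
          simp
        rw [h1]
        have h2 := norm_add_le (J' (J' (e i))) (e i)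
        have h3 : ‖e i‖ = 1 := e.orthonormal.1 i
        nlinarith [norm_nonneg (J' (J' (e i)) + e i), norm_nonneg (J' (J' (e i))),
          sq_nonneg (‖J' (J' (e i))‖ - 1)]
      rw [hsNorm_eq _ e]
      apply Real.sqrt_le_sqrt
      calc ∑ i, ‖(J' ∘ₗ J' + LinearMap.id : V₁ →ₗ[ℝ] V₁) (e i)‖ ^ 2
          ≤ ∑ i, (2 * ‖J' (J' (e i))‖ ^ 2 + 2) := Finset.sum_le_sum fun i _ => hterm i
        _ = 2 * (∑ i, ‖J' (J' (e i))‖ ^ 2) + 2 * (Module.finrank ℝ V₁) := by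
            rw [Finset.sum_add_distrib, ← Finset.mul_sum]
            simp [Finset.card_univ, mul_comm]
        _ ≤ 2 * (KJ * KJ) + 2 * (Module.finrank ℝ V₁) := by nlinarith [hsum2]
        _ ≤ 2 * C ^ 2 + 2 * (Module.finrank ℝ V₁) := by nlinarith [hKJC, hKJ0]
    set 𝒮 : Set ℝ := {x : ℝ | ∃ T : V₂, ∃ J : V₁ →ₗ[ℝ] V₁,
      gv T T = 1 ∧ IsKaplan β gv T J ∧ x = hsNorm (J ∘ₗ J + LinearMap.id)} with h𝒮
    have hbdd : BddAbove 𝒮 := by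
      refine ⟨Real.sqrt (2 * C ^ 2 + 2 * (Module.finrank ℝ V₁)), ?_⟩
      rintro x ⟨T', J', hT', hJ', rfl⟩
      exact hgen T' J' hT' hJ'
    have hmem : hsNorm (J ∘ₗ J + LinearMap.id) ∈ 𝒮 := ⟨T, J, hT, hJ, rfl⟩
    have hle := le_csSup hbdd hmem
    have hdev' : (Real.sqrt (Module.finrank ℝ V₁))⁻¹ * sSup 𝒮 < δ₀ := hdev
    have hfr : (0:ℝ) < Real.sqrt (Module.finrank ℝ V₁) :=
      Real.sqrt_pos.2 (by exact_mod_cast hm1)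
    have hsup : sSup 𝒮 < Real.sqrt (Module.finrank ℝ V₁) * δ₀ := by
      have h := mul_lt_mul_of_pos_left hdev' hfr
      rw [← mul_assoc, mul_inv_cancel₀ hfr.ne', one_mul] at h
      exact h
    have hmm : Real.sqrt ((Module.finrank ℝ V₁ : ℕ) : ℝ) = Real.sqrt m := by rw [hm]
    calc hsNorm (J ∘ₗ J + LinearMap.id) ≤ sSup 𝒮 := hle
      _ ≤ ε := by rw [hεdef, ← hmm]; exact hsup.le
  -- alternating bracket
  have halt : ∀ U W : V₁, β W U = - β U W := by
    intro U W
    have h1 := hβ.2.2.1 (U + W)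
    simp only [map_add, LinearMap.add_apply, hβ.2.2.1 U, hβ.2.2.1 W, zero_add, add_zero] at h1
    exact eq_neg_of_add_eq_zero_left h1
  -- pointwise unit bound
  have unitA : ∀ (T : V₂) (J : V₁ →ₗ[ℝ] V₁), gv T T = 1 → IsKaplan β gv T J →
      ∀ W : V₁, |‖J W‖ ^ 2 - ‖W‖ ^ 2| ≤ ε * ‖W‖ ^ 2 := by
    intro T J hT hJ W
    have hhs := hsupbound T J hT hJ
    have hskew : ∀ U W' : V₁, ⟪J U, W'⟫ = -⟪J W', U⟫ := by
      intro U W'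
      rw [hJ U W', hJ W' U, halt U W']
      simp [map_neg]
    have hAW : ⟪(J ∘ₗ J + LinearMap.id : V₁ →ₗ[ℝ] V₁) W, W⟫ = ‖W‖ ^ 2 - ‖J W‖ ^ 2 := by
      have h1 : (J ∘ₗ J + LinearMap.id : V₁ →ₗ[ℝ] V₁) W = J (J W) + W := by simp
      rw [h1, inner_add_left, hskew (J W) W, real_inner_self_eq_norm_sq,
        real_inner_self_eq_norm_sq]
      ring
    set e := stdOrthonormalBasis ℝ V₁ with he
    have hAnorm : ‖(J ∘ₗ J + LinearMap.id : V₁ →ₗ[ℝ] V₁) W‖ ≤ hsNorm (J ∘ₗ J + LinearMap.id) * ‖W‖ := by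
      have h1 := apply_norm_sq_le (J ∘ₗ J + LinearMap.id) e W
      have h2 : 0 ≤ ∑ i, ‖(J ∘ₗ J + LinearMap.id : V₁ →ₗ[ℝ] V₁) (e i)‖ ^ 2 :=
        Finset.sum_nonneg fun i _ => sq_nonneg _
      rw [hsNorm_eq _ e]
      have h3 : ‖(J ∘ₗ J + LinearMap.id : V₁ →ₗ[ℝ] V₁) W‖
          = Real.sqrt (‖(J ∘ₗ J + LinearMap.id : V₁ →ₗ[ℝ] V₁) W‖ ^ 2) :=
        (Real.sqrt_sq (norm_nonneg _)).symm
      rw [h3]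
      calc Real.sqrt (‖(J ∘ₗ J + LinearMap.id : V₁ →ₗ[ℝ] V₁) W‖ ^ 2)
          ≤ Real.sqrt ((∑ i, ‖(J ∘ₗ J + LinearMap.id : V₁ →ₗ[ℝ] V₁) (e i)‖ ^ 2) * ‖W‖ ^ 2) :=
            Real.sqrt_le_sqrt h1
        _ = Real.sqrt (∑ i, ‖(J ∘ₗ J + LinearMap.id : V₁ →ₗ[ℝ] V₁) (e i)‖ ^ 2) * ‖W‖ := by
            rw [Real.sqrt_mul h2, Real.sqrt_sq (norm_nonneg _)]
    calc |‖J W‖ ^ 2 - ‖W‖ ^ 2| = |⟪(J ∘ₗ J + LinearMap.id : V₁ →ₗ[ℝ] V₁) W, W⟫| := by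
          rw [hAW, abs_sub_comm]
      _ ≤ ‖(J ∘ₗ J + LinearMap.id : V₁ →ₗ[ℝ] V₁) W‖ * ‖W‖ := abs_real_inner_le_norm _ _
      _ ≤ (hsNorm (J ∘ₗ J + LinearMap.id) * ‖W‖) * ‖W‖ :=
          mul_le_mul_of_nonneg_right hAnorm (norm_nonneg _)
      _ ≤ ε * ‖W‖ ^ 2 := by nlinarith [hhs, norm_nonneg W]
  -- general bound
  have stepA : ∀ (S : V₂) (W : V₁),
      |‖kap β gv S W‖ ^ 2 - gv S S * ‖W‖ ^ 2| ≤ ε * (gv S S * ‖W‖ ^ 2) := by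
    intro S W
    rcases eq_or_ne S 0 with rfl | hS
    · simp
    · have hSS : 0 < gv S S := hgv.2 S hS
      set c := Real.sqrt (gv S S) with hc
      have hc0 : 0 < c := Real.sqrt_pos.2 hSS
      have hc2 : c ^ 2 = gv S S := Real.sq_sqrt hSS.le
      set S₁ := c⁻¹ • S with hS₁def
      have hS₁ : gv S₁ S₁ = 1 := by
        rw [hS₁def]
        simp only [map_smul, LinearMap.smul_apply, smul_eq_mul]
        rw [← hc2]; field_simp
      have hSc : S = c • S₁ := by
        rw [hS₁def, smul_smul, mul_inv_cancel₀ hc0.ne', one_smul]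
      have hkapc : kap β gv S = c • kap β gv S₁ := by rw [hSc, map_smul]
      have hpt := unitA S₁ (kap β gv S₁) hS₁ (kap_isKaplan β gv S₁) W
      have hnorm : ‖kap β gv S W‖ ^ 2 = c ^ 2 * ‖kap β gv S₁ W‖ ^ 2 := by
        rw [hkapc]
        simp only [LinearMap.smul_apply]
        rw [norm_smul, Real.norm_eq_abs, abs_of_pos hc0]
        ring
      rw [hnorm, ← hc2]
      calc |c ^ 2 * ‖kap β gv S₁ W‖ ^ 2 - c ^ 2 * ‖W‖ ^ 2|
          = c ^ 2 * |‖kap β gv S₁ W‖ ^ 2 - ‖W‖ ^ 2| := by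
            rw [← mul_sub, abs_mul, abs_of_pos (pow_pos hc0 2)]
        _ ≤ c ^ 2 * (ε * ‖W‖ ^ 2) :=
            mul_le_mul_of_nonneg_left hpt (le_of_lt (pow_pos hc0 2))
        _ = ε * (c ^ 2 * ‖W‖ ^ 2) := by ring
  -- main argument
  rcases eq_or_ne Z 0 with rfl | hZ0
  · constructor <;> simp
  · set Ψ : V₂ →ₗ[ℝ] V₁ := (kap β gv).flip X with hΨ
    have hΨapp : ∀ S, Ψ S = kap β gv S X := fun S => rfl
    have hΨinner : ∀ (S' : V₂) (W : V₁), gv (β X W) S' = ⟪Ψ S', W⟫ := by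
      intro S' W
      rw [hΨapp]
      exact (kap_isKaplan β gv S' X W).symm
    have hX2 : ‖X‖ ^ 2 = 1 := by rw [hX]; norm_num
    have hinj : Function.Injective Ψ := by
      rw [← LinearMap.ker_eq_bot]
      rw [Submodule.eq_bot_iff]
      intro S hSk
      rw [LinearMap.mem_ker, hΨapp] at hSk
      by_contra hS0
      have hSS := hgv.2 S hS0
      have h1 := stepA S X
      rw [hSk] at h1
      have h2 := (abs_le.mp h1).1
      have h3 : ‖(0:V₁)‖ = 0 := norm_zero
      nlinarith [h2, hX2, h3, mul_pos (show (0:ℝ) < 1 - ε by linarith) hSS]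
    have hle : LinearMap.range Ψ ≤ (LinearMap.ker (β X))ᗮ := by
      rintro _ ⟨S, rfl⟩
      rw [Submodule.mem_orthogonal]
      intro V hV
      rw [LinearMap.mem_ker] at hV
      rw [real_inner_comm, ← hΨinner S V, hV, map_zero, LinearMap.zero_apply]
    have hrange : LinearMap.range Ψ = (LinearMap.ker (β X))ᗮ := by
      apply Submodule.eq_of_le_of_finrank_le hle
      have h1 := Submodule.finrank_add_finrank_orthogonal (LinearMap.ker (β X))
      have h2 := LinearMap.finrank_range_add_finrank_ker (β X)
      have h3 := Submodule.finrank_le (LinearMap.range (β X))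
      have h4 : Module.finrank ℝ (LinearMap.range Ψ) = Module.finrank ℝ V₂ :=
        LinearMap.finrank_range_of_inj hinj
      omega
    have hZr : Z ∈ LinearMap.range Ψ := by rw [hrange]; exact hZmem
    obtain ⟨S, hS⟩ := hZr
    have hSne : S ≠ 0 := by
      rintro rfl
      rw [map_zero] at hS
      exact hZ0 hS.symm
    have hn : 0 < gv S S := hgv.2 S hSne
    set T := β X Z with hT
    have hTS' : ∀ S' : V₂, gv T S' = ⟪Ψ S', Z⟫ := fun S' => hΨinner S' Z
    have hZsq : ‖Z‖ ^ 2 = gv T S := by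
      rw [hTS' S, hS, real_inner_self_eq_norm_sq]
    set Hm : V₂ →ₗ[ℝ] V₂ := (β X) ∘ₗ Ψ - LinearMap.id with hHm
    have hHapp : ∀ P, Hm P = β X (Ψ P) - P := by intro P; simp [hHm]
    have hHsym : ∀ P Q, gv (Hm P) Q = gv (Hm Q) P := by
      intro P Q
      rw [hHapp, hHapp]
      simp only [map_sub, LinearMap.sub_apply]
      rw [hΨinner Q (Ψ P), hΨinner P (Ψ Q), hgv.1 P Q, real_inner_comm]
    have hHq : ∀ W' : V₂, |gv (Hm W') W'| ≤ ε * gv W' W' := by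
      intro W'
      have h1 := stepA W' X
      simp only [hX2, mul_one] at h1
      have h2 : gv (Hm W') W' = ‖Ψ W'‖ ^ 2 - gv W' W' := by
        rw [hHapp]
        simp only [map_sub, LinearMap.sub_apply]
        rw [hΨinner W' (Ψ W'), real_inner_self_eq_norm_sq]
      rw [h2]
      exact h1
    have hh := quad_to_norm hgv hε0.le Hm hHsym hHq S
    have hHS : Hm S = T - S := by rw [hHapp, hS]
    rw [hHS] at hh
    have haS := hHq S
    rw [hHS] at haS
    have hcs := gv_cs_s11 hgv (T - S) S
    have hexp1 : gv (T - S) S = gv T S - gv S S := by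
      simp [map_sub, LinearMap.sub_apply]
    have hexp2 : gv (T - S) (T - S) = gv T T - 2 * gv T S + gv S S := by
      simp only [map_sub, LinearMap.sub_apply]
      rw [hgv.1 S T]; ring
    have habs := abs_le.mp haS
    have hTS0 : 0 ≤ gv T S := by rw [← hZsq]; positivity
    have low : (1 - ε) * ‖Z‖ ^ 2 ≤ gv T T := by
      rw [hZsq]
      have haeps : 0 ≤ gv T S - gv S S + ε * gv S S := by
        have := habs.1
        rw [hexp1] at this
        linarith
      nlinarith [hcs, hexp2, hexp1, hn, mul_nonneg hTS0 haeps]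
    have up : gv T T ≤ (1 + ε) * ‖Z‖ ^ 2 := by
      rw [hZsq]
      have ha2 : gv T S - gv S S ≤ ε * gv S S := by
        have := habs.2
        rw [hexp1] at this
        linarith
      have hkey : 0 ≤ (ε * gv S S - (gv T S - gv S S)) * ((1 - ε) * gv S S) :=
        mul_nonneg (by linarith) (mul_nonneg (by linarith) hn.le)
      have hh' : gv (T - S) (T - S) * gv S S ≤ ε ^ 2 * gv S S * gv S S :=
        mul_le_mul_of_nonneg_right hh hn.le
      nlinarith [hkey, hh', hexp2, hn]
    have h1ε : (0:ℝ) ≤ 1 - ε := by linarith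
    have h2ε : (0:ℝ) ≤ 1 + ε := by linarith
    constructor
    · have hs := Real.sqrt_le_sqrt low
      rw [Real.sqrt_mul h1ε, Real.sqrt_sq (norm_nonneg Z)] at hs
      exact hs
    · have hs := Real.sqrt_le_sqrt up
      rw [Real.sqrt_mul h2ε, Real.sqrt_sq (norm_nonneg Z)] at hs
      exact hs
end
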